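/- arXiv:1401.0320 — 6 statements merged into one kernel-verified Lean document; each statement's English description precedes it below -/
import Mathlib

section
/- Let θ > 0. For every τ ∈ ℝ and all t, s ∈ ℝ with |t − s| ≤ θ one has |X(t+τ, s+τ) − X(t,s)| ≤ √q · θ · exp(2|A|_∞ θ) · sup_{u∈ℝ}|A(u+τ) − A(u)|. -/
/-!
Both `u ↦ X(u+τ, s+τ)` and `u ↦ X(u, s)` solve linear equations `Y' = A(u+τ) Y`, `Z' = A(u) Z`
with `Y(s) = Z(s) = I`. Grönwall bounds `‖Y(u)‖ ≤ √q e^{‖A‖_∞ |u - s|}`, and the difference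
`D = Y - Z` solves `D' = A(u) D + (A(u+τ) - A(u)) Y`, whose forcing term is at most
`δ √q e^{‖A‖_∞ θ}` with `δ = sup_u ‖A(u+τ) - A(u)‖`. Grönwall once more, started from `D(s) = 0`,
gives `‖D(t)‖ ≤ δ √q θ e^{2‖A‖_∞ θ}`.
-/

open scoped Matrix
open MeasureTheory Filter

attribute [local instance] Matrix.frobeniusSeminormedAddCommGroup
  Matrix.frobeniusNormedAddCommGroup Matrix.frobeniusNormedSpace
  Matrix.frobeniusNormedRing Matrix.frobeniusNormedAlgebra Matrix.frobeniusIsBoundedSMul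

noncomputable section

abbrev Mat (q : ℕ) := Matrix (Fin q) (Fin q) ℂ

open Set

theorem norm_le_gronwallBound_of_hasDerivAt_uIcc {E : Type*} [NormedAddCommGroup E]
    [NormedSpace ℝ E] {f f' : ℝ → E} {K ε s t : ℝ}
    (hf : ∀ u ∈ uIcc s t, HasDerivAt f (f' u) u)
    (bound : ∀ u ∈ uIcc s t, ‖f' u‖ ≤ K * ‖f u‖ + ε) :
    ‖f t‖ ≤ gronwallBound ‖f s‖ K ε |t - s| := by
  rcases le_total s t with hst | hts
  · rw [uIcc_of_le hst] at hf bound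
    rw [abs_of_nonneg (sub_nonneg.2 hst)]
    exact norm_le_gronwallBound_of_norm_deriv_right_le
      (fun u hu => (hf u hu).continuousAt.continuousWithinAt)
      (fun u hu => (hf u (Ico_subset_Icc_self hu)).hasDerivWithinAt) le_rfl
      (fun u hu => bound u (Ico_subset_Icc_self hu)) t ⟨hst, le_rfl⟩
  · -- backwards in time: apply the forward inequality to `u ↦ f (-u)` on `[-s, -t]`
    rw [uIcc_of_ge hts] at hf bound
    have hneg : ∀ u ∈ Icc (-s) (-t), -u ∈ Icc t s := fun u hu =>
      ⟨le_neg_of_le_neg hu.2, neg_le_of_neg_le hu.1⟩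
    have hg : ∀ u ∈ Icc (-s) (-t), HasDerivAt (fun u => f (-u)) (-f' (-u)) u := fun u hu => by
      simpa [Function.comp_def] using (hf _ (hneg u hu)).scomp u (hasDerivAt_neg u)
    have := norm_le_gronwallBound_of_norm_deriv_right_le (δ := ‖f s‖)
      (fun u hu => (hg u hu).continuousAt.continuousWithinAt)
      (fun u hu => (hg u (Ico_subset_Icc_self hu)).hasDerivWithinAt) (by simp)
      (fun u hu => by simpa using bound _ (hneg u (Ico_subset_Icc_self hu)))
      (-t) ⟨neg_le_neg hts, le_rfl⟩
    rwa [neg_neg, sub_neg_eq_add, neg_add_eq_sub, ← neg_sub, ← abs_of_nonpos (sub_nonpos.2 hts)]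
      at this

theorem gronwallBound_zero_le_mul_exp {K ε x : ℝ} (hK : 0 ≤ K) (hε : 0 ≤ ε) :
    gronwallBound 0 K ε x ≤ ε * x * Real.exp (K * x) := by
  rcases hK.eq_or_lt with rfl | hK
  · simp [gronwallBound_K0]
  · have hexp : Real.exp (K * x) - 1 ≤ K * x * Real.exp (K * x) := by
      have : (1 - K * x) * Real.exp (K * x) ≤ 1 :=
        calc (1 - K * x) * Real.exp (K * x) ≤ Real.exp (-(K * x)) * Real.exp (K * x) := by
              gcongr; exact Real.one_sub_le_exp_neg _
          _ = 1 := by rw [← Real.exp_add, neg_add_cancel, Real.exp_zero]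
      linarith
    calc gronwallBound 0 K ε x = ε / K * (Real.exp (K * x) - 1) := by
          simp [gronwallBound_of_K_ne_0 hK.ne']
      _ ≤ ε / K * (K * x * Real.exp (K * x)) := by gcongr
      _ = ε * x * Real.exp (K * x) := by field_simp

section LinearODE

variable {E : Type*} [NormedRing E] [NormedAlgebra ℝ E]

theorem norm_le_mul_exp_of_hasDerivAt_mul_left {B Y : ℝ → E} {K s t : ℝ}
    (hY : ∀ u ∈ uIcc s t, HasDerivAt Y (B u * Y u) u) (hB : ∀ u ∈ uIcc s t, ‖B u‖ ≤ K) :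
    ‖Y t‖ ≤ ‖Y s‖ * Real.exp (K * |t - s|) := by
  have bound : ∀ u ∈ uIcc s t, ‖B u * Y u‖ ≤ K * ‖Y u‖ + 0 := fun u hu => by
    rw [add_zero]
    exact (norm_mul_le _ _).trans (mul_le_mul_of_nonneg_right (hB u hu) (norm_nonneg _))
  simpa [gronwallBound_ε0] using norm_le_gronwallBound_of_hasDerivAt_uIcc hY bound

theorem norm_sub_le_of_hasDerivAt_mul_left {A B Y Z : ℝ → E} {K δ s t : ℝ}
    (hY : ∀ u ∈ uIcc s t, HasDerivAt Y (B u * Y u) u)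
    (hZ : ∀ u ∈ uIcc s t, HasDerivAt Z (A u * Z u) u) (hYZ : Y s = Z s)
    (hA : ∀ u ∈ uIcc s t, ‖A u‖ ≤ K) (hB : ∀ u ∈ uIcc s t, ‖B u‖ ≤ K)
    (hBA : ∀ u ∈ uIcc s t, ‖B u - A u‖ ≤ δ) :
    ‖Y t - Z t‖ ≤ ‖Y s‖ * |t - s| * Real.exp (2 * K * |t - s|) * δ := by
  have hK : 0 ≤ K := (norm_nonneg _).trans (hA s left_mem_uIcc)
  have hδ : 0 ≤ δ := (norm_nonneg _).trans (hBA s left_mem_uIcc)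
  set M := ‖Y s‖ * Real.exp (K * |t - s|)
  have hYM : ∀ u ∈ uIcc s t, ‖Y u‖ ≤ M := fun u hu => by
    have hsub := uIcc_subset_uIcc_left hu
    calc ‖Y u‖ ≤ ‖Y s‖ * Real.exp (K * |u - s|) :=
          norm_le_mul_exp_of_hasDerivAt_mul_left (fun v hv => hY v (hsub hv))
            (fun v hv => hB v (hsub hv))
      _ ≤ ‖Y s‖ * Real.exp (K * |t - s|) := by
          gcongr ‖Y s‖ * Real.exp (K * ?_); exact abs_sub_left_of_mem_uIcc hu
  have hD : ∀ u ∈ uIcc s t,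
      HasDerivAt (fun u => Y u - Z u) (A u * (Y u - Z u) + (B u - A u) * Y u) u :=
    fun u hu => ((hY u hu).sub (hZ u hu)).congr_deriv (by noncomm_ring)
  have hD' : ∀ u ∈ uIcc s t,
      ‖A u * (Y u - Z u) + (B u - A u) * Y u‖ ≤ K * ‖Y u - Z u‖ + δ * M := fun u hu =>
    calc _ ≤ ‖A u‖ * ‖Y u - Z u‖ + ‖B u - A u‖ * ‖Y u‖ :=
          norm_add_le_of_le (norm_mul_le _ _) (norm_mul_le _ _)
      _ ≤ _ := by gcongr; exacts [hA u hu, hBA u hu, hYM u hu]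
  calc ‖Y t - Z t‖ ≤ gronwallBound 0 K (δ * M) |t - s| := by
        simpa [hYZ] using norm_le_gronwallBound_of_hasDerivAt_uIcc hD hD'
    _ ≤ δ * M * |t - s| * Real.exp (K * |t - s|) :=
        gronwallBound_zero_le_mul_exp hK (by positivity)
    _ = ‖Y s‖ * |t - s| * Real.exp (2 * K * |t - s|) * δ := by
        rw [show 2 * K * |t - s| = K * |t - s| + K * |t - s| by ring, Real.exp_add]; ring

end LinearODE

theorem Matrix.frobenius_norm_one {n α : Type*} [Fintype n] [DecidableEq n]
    [SeminormedAddCommGroup α] [One α] :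
    ‖(1 : Matrix n n α)‖ = Real.sqrt (Fintype.card n) * ‖(1 : α)‖ := by
  simpa using congrArg NNReal.toReal (Matrix.frobenius_nnnorm_one (n := n) (α := α))

theorem translation_bound_of_fundamental_matrix_general {q : ℕ}
    (A : ℝ → Mat q) (hAbdd : ∃ C : ℝ, ∀ t : ℝ, ‖A t‖ ≤ C)
    (X : ℝ → Mat q) (hX : ∀ t : ℝ, HasDerivAt X (A t * X t) t)
    (hXinv : ∀ t : ℝ, IsUnit (X t))
    (θ : ℝ) :
    ∀ τ t s : ℝ, |t - s| ≤ θ →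
      ‖X (t + τ) * (X (s + τ))⁻¹ - X t * (X s)⁻¹‖ ≤
        Real.sqrt q * θ * Real.exp (2 * (⨆ u : ℝ, ‖A u‖) * θ) *
          ⨆ u : ℝ, ‖A (u + τ) - A u‖ := by
  obtain ⟨C, hC⟩ := hAbdd
  intro τ t s hts
  have hbddA : BddAbove (range fun u => ‖A u‖) := ⟨C, forall_mem_range.2 hC⟩
  have hbddδ : BddAbove (range fun u => ‖A (u + τ) - A u‖) :=
    ⟨C + C, forall_mem_range.2 fun u => (norm_sub_le _ _).trans (add_le_add (hC _) (hC _))⟩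
  have hXshift : ∀ u, HasDerivAt (fun u => X (u + τ)) (A (u + τ) * X (u + τ)) u := fun u =>
    ((hX (u + τ)).scomp u ((hasDerivAt_id u).add_const τ)).congr_deriv (one_smul _ _)
  have hXXinv : ∀ u, X u * (X u)⁻¹ = 1 := fun u =>
    Matrix.mul_nonsing_inv _ ((Matrix.isUnit_iff_isUnit_det _).1 (hXinv u))
  have key := norm_sub_le_of_hasDerivAt_mul_left (s := s) (t := t)
    (Y := fun u => X (u + τ) * (X (s + τ))⁻¹) (Z := fun u => X u * (X s)⁻¹)
    (fun u _ => ((hXshift u).mul_const _).congr_deriv (mul_assoc _ _ _))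
    (fun u _ => ((hX u).mul_const _).congr_deriv (mul_assoc _ _ _)) (by simp [hXXinv])
    (fun u _ => le_ciSup hbddA u) (fun u _ => le_ciSup hbddA (u + τ))
    (fun u _ => le_ciSup hbddδ u)
  rw [hXXinv, Matrix.frobenius_norm_one] at key
  have hK : 0 ≤ ⨆ u, ‖A u‖ := Real.iSup_nonneg fun _ => norm_nonneg _
  have hδ : 0 ≤ ⨆ u, ‖A (u + τ) - A u‖ := Real.iSup_nonneg fun _ => norm_nonneg _
  have hθ : 0 ≤ θ := (abs_nonneg _).trans hts
  refine key.trans ?_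
  simp only [Fintype.card_fin, norm_one, mul_one]
  gcongr

/-- for the fundamental matrix `X(t,s) = X(t) X(s)⁻¹` of `x' = A(t)x` and
`|t - s| ≤ θ`, the translate satisfies
`‖X(t+τ, s+τ) − X(t,s)‖ ≤ √q · θ · exp(2‖A‖_∞ θ) · sup_u ‖A(u+τ) − A(u)‖`. -/
theorem translation_bound_of_fundamental_matrix {q : ℕ} (hq : 1 ≤ q)
    (A : ℝ → Mat q) (hAcont : Continuous A) (hAbdd : ∃ C : ℝ, ∀ t : ℝ, ‖A t‖ ≤ C)
    (X : ℝ → Mat q) (hX : ∀ t : ℝ, HasDerivAt X (A t * X t) t)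
    (hXinv : ∀ t : ℝ, IsUnit (X t))
    (θ : ℝ) (hθ : 0 < θ) :
    ∀ τ t s : ℝ, |t - s| ≤ θ →
      ‖X (t + τ) * (X (s + τ))⁻¹ - X t * (X s)⁻¹‖ ≤
        Real.sqrt q * θ * Real.exp (2 * (⨆ u : ℝ, ‖A u‖) * θ) *
          ⨆ u : ℝ, ‖A (u + τ) - A u‖ :=
  translation_bound_of_fundamental_matrix_general A hAbdd X hX hXinv θ
end
end

section
/- There exists a constant K' > 0, depending only on q, |A|_∞ and θ, such that for every ε ∈ (0,1], every τ > 0 with sup_{t∈ℝ}|A(t+τ) − A(t)| ≤ ε, and every p ∈ ℤ with sup_{n∈ℤ}|t_{n+p} − t_n − τ| ≤ ε, the following hold for all n ∈ ℤ: (a) |X(t_{n+p+1}, u+τ) − X(t_{n+1}, u)| ≤ K'ε for all u ∈ [t_n, t_{n+1}]; (b) |X(t+τ, t_{n+p}) − X(t, t_n)| ≤ K'ε for all t ∈ [t_n, t_{n+1}]; (c) |X(t+τ, s+τ) − X(t,s)| ≤ K'ε for all t, s ∈ ℝ with |t − s| ≤ θ; (d) |X(t_{n+p+1}, t_{n+p})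 − X(t_{n+1}, t_n)| ≤ K'ε. -/
open scoped Matrix
open MeasureTheory Filter

attribute [local instance] Matrix.frobeniusSeminormedAddCommGroup
  Matrix.frobeniusNormedAddCommGroup Matrix.frobeniusNormedSpace
  Matrix.frobeniusNormedRing Matrix.frobeniusNormedAlgebra Matrix.frobeniusIsBoundedSMul

noncomputable section

/-! All four estimates are instances of one bound on `‖X(t', s') - X(t, s)‖` for `|t - s| ≤ θ`
and `t'`, `s'` within `ε` of `t + τ`, `s + τ`. Write
`X(t', s') - X(t, s) = (X(t', t + τ) - 1) X(t + τ, s') + X(t + τ, s + τ) (X(s + τ, s') - 1)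
  + (X(t + τ, s + τ) - X(t, s))`.
A transition over a time at most `ε` is `O(ε)`-close to the identity, and
`Y(u) = X(u + τ, s + τ) - X(u, s)` vanishes at `s` and solves
`Y' = A(u) Y + (A(u + τ) - A(u)) X(u + τ, s + τ)`, whose forcing term is `O(ε)`.
Each of these bounds, and the bound on `‖X(t, s)‖` for `|t - s| ≤ θ + 1`, is Grönwall's
inequality. -/

open Set Real

theorem gronwallBound_le_add_mul_mul_exp {δ K ε x : ℝ} (hK : 0 ≤ K) (hε : 0 ≤ ε) :
    gronwallBound δ K ε x ≤ (δ + ε * x) * exp (K * x) := by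
  rcases hK.eq_or_lt with rfl | hK
  · simp [gronwallBound_K0]
  rw [gronwallBound_of_K_ne_0 hK.ne']
  -- `1 - exp (-K x) ≤ K x`, multiplied by `exp (K x)`
  have hexp : exp (K * x) - 1 ≤ K * x * exp (K * x) := by
    have h := add_one_le_exp (-(K * x))
    rw [exp_neg] at h
    have := exp_pos (K * x)
    field_simp at h
    nlinarith
  have : ε / K * (exp (K * x) - 1) ≤ ε * x * exp (K * x) := by
    rw [div_mul_eq_mul_div, div_le_iff₀ hK]
    nlinarith
  linarith

section Gronwall

variable {E : Type*} [NormedAddCommGroup E] [NormedSpace ℝ E] {f f' : ℝ → E} {K ε : ℝ}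

theorem norm_le_add_mul_mul_exp_of_norm_deriv_le_of_le {s t : ℝ} (hK : 0 ≤ K) (hε : 0 ≤ ε)
    (hst : s ≤ t) (hf : ∀ u ∈ Icc s t, HasDerivAt f (f' u) u)
    (bound : ∀ u ∈ Icc s t, ‖f' u‖ ≤ K * ‖f u‖ + ε) :
    ‖f t‖ ≤ (‖f s‖ + ε * (t - s)) * exp (K * (t - s)) :=
  (norm_le_gronwallBound_of_norm_deriv_right_le
      (fun u hu => (hf u hu).continuousAt.continuousWithinAt)
      (fun u hu => (hf u (Ico_subset_Icc_self hu)).hasDerivWithinAt) le_rfl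
      (fun u hu => bound u (Ico_subset_Icc_self hu)) t ⟨hst, le_rfl⟩).trans
    (gronwallBound_le_add_mul_mul_exp hK hε)

theorem norm_le_add_mul_mul_exp_of_norm_deriv_le {s t : ℝ} (hK : 0 ≤ K) (hε : 0 ≤ ε)
    (hf : ∀ u ∈ uIcc s t, HasDerivAt f (f' u) u)
    (bound : ∀ u ∈ uIcc s t, ‖f' u‖ ≤ K * ‖f u‖ + ε) :
    ‖f t‖ ≤ (‖f s‖ + ε * |t - s|) * exp (K * |t - s|) := by
  rcases le_total s t with hst | hts
  · rw [uIcc_of_le hst] at hf bound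
    rw [abs_of_nonneg (sub_nonneg.2 hst)]
    exact norm_le_add_mul_mul_exp_of_norm_deriv_le_of_le hK hε hst hf bound
  rw [uIcc_of_ge hts] at hf bound
  rw [abs_of_nonpos (sub_nonpos.2 hts), neg_sub]
  have hmem : ∀ u ∈ Icc t s, s + t - u ∈ Icc t s := fun u hu =>
    ⟨by linarith [hu.2], by linarith [hu.1]⟩
  have key := norm_le_add_mul_mul_exp_of_norm_deriv_le_of_le (f := fun u => f (s + t - u))
    (f' := fun u => -f' (s + t - u)) hK hε hts
    (fun u hu => by
      simpa [Function.comp_def] using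
        (hf _ (hmem u hu)).scomp u ((hasDerivAt_id u).const_sub (s + t)))
    (fun u hu => by simpa using bound _ (hmem u hu))
  simpa using key

end Gronwall

section Transition

variable {n 𝕜 : Type*} [Fintype n] [DecidableEq n] [RCLike 𝕜]

def transition (X : ℝ → Matrix n n 𝕜) (t s : ℝ) : Matrix n n 𝕜 := X t * (X s)⁻¹

variable {A X : ℝ → Matrix n n 𝕜} {C : ℝ}

theorem transition_self (hXinv : ∀ t, IsUnit (X t)) (t : ℝ) : transition X t t = 1 :=
  Matrix.mul_nonsing_inv _ ((Matrix.isUnit_iff_isUnit_det _).mp (hXinv t))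

theorem transition_mul_transition (hXinv : ∀ t, IsUnit (X t)) (t r s : ℝ) :
    transition X t r * transition X r s = transition X t s := by
  simp only [transition, Matrix.mul_assoc, ← Matrix.mul_assoc (X r)⁻¹,
    Matrix.nonsing_inv_mul _ ((Matrix.isUnit_iff_isUnit_det _).mp (hXinv r)), Matrix.one_mul]

theorem hasDerivAt_transition (hX : ∀ t, HasDerivAt X (A t * X t) t) (s t : ℝ) :
    HasDerivAt (fun u => transition X u s) (A t * transition X t s) t := by
  have h := (hX t).mul_const (X s)⁻¹
  simp only [Matrix.mul_assoc] at h
  exact h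

theorem norm_transition_le (hA : ∀ t, ‖A t‖ ≤ C) (hX : ∀ t, HasDerivAt X (A t * X t) t)
    (hXinv : ∀ t, IsUnit (X t)) (t s : ℝ) :
    ‖transition X t s‖ ≤ ‖(1 : Matrix n n 𝕜)‖ * exp (C * |t - s|) := by
  have h := norm_le_add_mul_mul_exp_of_norm_deriv_le (f := fun u => transition X u s)
    (ε := 0) (s := s) (t := t) ((norm_nonneg _).trans (hA 0)) le_rfl
    (fun u _ => hasDerivAt_transition hX s u)
    (fun u _ => by simpa using (norm_mul_le _ _).trans (by gcongr; exact hA u))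
  simpa [transition_self hXinv] using h

theorem norm_transition_sub_one_le (hA : ∀ t, ‖A t‖ ≤ C) (hX : ∀ t, HasDerivAt X (A t * X t) t)
    (hXinv : ∀ t, IsUnit (X t)) (t s : ℝ) :
    ‖transition X t s - 1‖ ≤ C * ‖(1 : Matrix n n 𝕜)‖ * |t - s| * exp (C * |t - s|) := by
  have hC : 0 ≤ C := (norm_nonneg _).trans (hA 0)
  have h := norm_le_add_mul_mul_exp_of_norm_deriv_le (f := fun u => transition X u s - 1)
    (f' := fun u => A u * transition X u s) (ε := C * ‖(1 : Matrix n n 𝕜)‖) (s := s) (t := t) hC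
    (by positivity)
    (fun u _ => (hasDerivAt_transition hX s u).sub_const 1)
    (fun u _ => by
      calc ‖A u * transition X u s‖ = ‖A u * (transition X u s - 1) + A u * 1‖ := by
            rw [← mul_add, sub_add_cancel]
        _ ≤ ‖A u‖ * ‖transition X u s - 1‖ + ‖A u‖ * ‖(1 : Matrix n n 𝕜)‖ :=
            (norm_add_le _ _).trans (add_le_add (norm_mul_le _ _) (norm_mul_le _ _))
        _ ≤ C * ‖transition X u s - 1‖ + C * ‖(1 : Matrix n n 𝕜)‖ := by gcongr <;> exact hA u)
  simpa [transition_self hXinv, mul_assoc] using h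

theorem norm_transition_add_sub_transition_le (hA : ∀ t, ‖A t‖ ≤ C)
    (hX : ∀ t, HasDerivAt X (A t * X t) t) (hXinv : ∀ t, IsUnit (X t)) {τ ε : ℝ}
    (hAτ : ∀ t, ‖A (t + τ) - A t‖ ≤ ε) (t s : ℝ) :
    ‖transition X (t + τ) (s + τ) - transition X t s‖ ≤
      ε * ‖(1 : Matrix n n 𝕜)‖ * |t - s| * exp (2 * C * |t - s|) := by
  have hC : 0 ≤ C := (norm_nonneg _).trans (hA 0)
  have hε : 0 ≤ ε := (norm_nonneg _).trans (hAτ 0)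
  have hB : ∀ u ∈ uIcc s t, ‖transition X (u + τ) (s + τ)‖ ≤
      ‖(1 : Matrix n n 𝕜)‖ * exp (C * |t - s|) := fun u hu => by
    refine (norm_transition_le hA hX hXinv _ _).trans ?_
    rw [add_sub_add_right_eq_sub]
    gcongr ?_ * exp (C * ?_)
    exact abs_sub_left_of_mem_uIcc hu
  have h := norm_le_add_mul_mul_exp_of_norm_deriv_le
    (f := fun u => transition X (u + τ) (s + τ) - transition X u s)
    (f' := fun u => A (u + τ) * transition X (u + τ) (s + τ) - A u * transition X u s)
    (ε := ε * (‖(1 : Matrix n n 𝕜)‖ * exp (C * |t - s|))) (s := s) (t := t) hC (by positivity)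
    (fun u _ => ((hasDerivAt_transition hX (s + τ) (u + τ)).comp_add_const u τ).sub
      (hasDerivAt_transition hX s u))
    (fun u hu => by
      calc ‖A (u + τ) * transition X (u + τ) (s + τ) - A u * transition X u s‖
          = ‖A u * (transition X (u + τ) (s + τ) - transition X u s) +
              (A (u + τ) - A u) * transition X (u + τ) (s + τ)‖ := by noncomm_ring
        _ ≤ ‖A u‖ * ‖transition X (u + τ) (s + τ) - transition X u s‖ +
              ‖A (u + τ) - A u‖ * ‖transition X (u + τ) (s + τ)‖ :=
            (norm_add_le _ _).trans (add_le_add (norm_mul_le _ _) (norm_mul_le _ _))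
        _ ≤ C * ‖transition X (u + τ) (s + τ) - transition X u s‖ +
              ε * (‖(1 : Matrix n n 𝕜)‖ * exp (C * |t - s|)) := by
            gcongr
            exacts [hA u, hAτ u, hB u hu])
  simp only [transition_self hXinv, sub_self, norm_zero, zero_add] at h
  rw [two_mul, add_mul, exp_add]
  linarith

theorem norm_transition_sub_transition_le (hA : ∀ t, ‖A t‖ ≤ C)
    (hX : ∀ t, HasDerivAt X (A t * X t) t) (hXinv : ∀ t, IsUnit (X t)) {τ ε : ℝ}
    (hAτ : ∀ t, ‖A (t + τ) - A t‖ ≤ ε) (hε : ε ≤ 1) {r t s t' s' : ℝ} (hts : |t - s| ≤ r)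
    (ht' : |t' - (t + τ)| ≤ ε) (hs' : |s' - (s + τ)| ≤ ε) :
    ‖transition X t' s' - transition X t s‖ ≤
      (2 * (C * ‖(1 : Matrix n n 𝕜)‖ * exp C) * (‖(1 : Matrix n n 𝕜)‖ * exp (C * (r + 1))) +
        ‖(1 : Matrix n n 𝕜)‖ * r * exp (2 * C * r)) * ε := by
  set N := ‖(1 : Matrix n n 𝕜)‖
  have hC : 0 ≤ C := (norm_nonneg _).trans (hA 0)
  have hε0 : 0 ≤ ε := (norm_nonneg _).trans (hAτ 0)
  have near_one : ∀ {a b : ℝ}, |a - b| ≤ ε → ‖transition X a b - 1‖ ≤ C * N * exp C * ε :=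
    fun {a b} hab => (norm_transition_sub_one_le hA hX hXinv a b).trans <| by
      rw [mul_right_comm (C * N) (exp C)]
      gcongr C * N * ?_ * ?_
      exact exp_le_exp.2 (mul_le_of_le_one_right hC (hab.trans hε))
  have bounded : ∀ {a b : ℝ}, |a - b| ≤ r + 1 → ‖transition X a b‖ ≤ N * exp (C * (r + 1)) :=
    fun hab => (norm_transition_le hA hX hXinv _ _).trans (by gcongr)
  have split : transition X t' s' - transition X t s =
      (transition X t' (t + τ) - 1) * transition X (t + τ) s' +
        transition X (t + τ) (s + τ) * (transition X (s + τ) s' - 1) +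
        (transition X (t + τ) (s + τ) - transition X t s) := by
    simp only [sub_mul, mul_sub, transition_mul_transition hXinv, one_mul, mul_one]
    abel
  have h₁ := near_one ht'
  have h₂ : ‖transition X (t + τ) s'‖ ≤ N * exp (C * (r + 1)) := bounded <| by
    calc |t + τ - s'| = |(t - s) - (s' - (s + τ))| := by ring_nf
      _ ≤ |t - s| + |s' - (s + τ)| := abs_sub _ _
      _ ≤ r + 1 := by linarith
  have h₃ : ‖transition X (t + τ) (s + τ)‖ ≤ N * exp (C * (r + 1)) := bounded <| by
    rw [add_sub_add_right_eq_sub]; linarith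
  have h₄ := near_one (by rwa [abs_sub_comm] : |s + τ - s'| ≤ ε)
  have h₅ : ‖transition X (t + τ) (s + τ) - transition X t s‖ ≤ N * r * exp (2 * C * r) * ε := by
    refine (norm_transition_add_sub_transition_le hA hX hXinv hAτ t s).trans ?_
    rw [mul_comm _ ε, ← mul_assoc, ← mul_assoc]
    gcongr
    exact mul_nonneg (by positivity) ((abs_nonneg _).trans hts)
  rw [split]
  calc _ ≤ ‖transition X t' (t + τ) - 1‖ * ‖transition X (t + τ) s'‖ +
        ‖transition X (t + τ) (s + τ)‖ * ‖transition X (s + τ) s' - 1‖ +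
        ‖transition X (t + τ) (s + τ) - transition X t s‖ :=
        (norm_add₃_le).trans (by gcongr <;> exact norm_mul_le _ _)
    _ ≤ C * N * exp C * ε * (N * exp (C * (r + 1))) +
        N * exp (C * (r + 1)) * (C * N * exp C * ε) + N * r * exp (2 * C * r) * ε := by
        gcongr
    _ = _ := by ring

end Transition

theorem epsilon_translation_estimates_general {q : ℕ}
    (ts : ℤ → ℝ) (hts : StrictMono ts)
    (θ : ℝ) (hθ : IsLUB (Set.range fun n : ℤ => ts (n + 1) - ts n) θ)
    (A : ℝ → Mat q) (hAbdd : ∃ C : ℝ, ∀ t : ℝ, ‖A t‖ ≤ C)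
    (X : ℝ → Mat q) (hX : ∀ t : ℝ, HasDerivAt X (A t * X t) t)
    (hXinv : ∀ t : ℝ, IsUnit (X t)) :
    ∃ K' : ℝ, 0 < K' ∧
      ∀ ε : ℝ, ε ∈ Set.Ioc (0 : ℝ) 1 →
      ∀ τ : ℝ, 0 < τ → (∀ t : ℝ, ‖A (t + τ) - A t‖ ≤ ε) →
      ∀ p : ℤ, (∀ n : ℤ, |ts (n + p) - ts n - τ| ≤ ε) →
      ∀ n : ℤ,
        (∀ u ∈ Set.Icc (ts n) (ts (n + 1)),
          ‖X (ts (n + p + 1)) * (X (u + τ))⁻¹ - X (ts (n + 1)) * (X u)⁻¹‖ ≤ K' * ε) ∧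
        (∀ t ∈ Set.Icc (ts n) (ts (n + 1)),
          ‖X (t + τ) * (X (ts (n + p)))⁻¹ - X t * (X (ts n))⁻¹‖ ≤ K' * ε) ∧
        (∀ t s : ℝ, |t - s| ≤ θ →
          ‖X (t + τ) * (X (s + τ))⁻¹ - X t * (X s)⁻¹‖ ≤ K' * ε) ∧
        ‖X (ts (n + p + 1)) * (X (ts (n + p)))⁻¹ - X (ts (n + 1)) * (X (ts n))⁻¹‖ ≤ K' * ε := by
  obtain ⟨C, hC⟩ := hAbdd
  have hC0 : 0 ≤ C := (norm_nonneg _).trans (hC 0)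
  have hgap : ∀ m, ts (m + 1) - ts m ≤ θ := fun m => hθ.1 ⟨m, rfl⟩
  have hθ0 : 0 ≤ θ := (sub_pos.2 (hts (lt_add_one 0))).le.trans (hgap 0)
  set N := ‖(1 : Mat q)‖
  set K := 2 * (C * N * exp C) * (N * exp (C * (θ + 1))) + N * θ * exp (2 * C * θ)
  have hK : 0 ≤ K := by positivity
  refine ⟨K + 1, by linarith, ?_⟩
  rintro ε ⟨hε0, hε1⟩ τ - hAτ p hp n
  have estimate : ∀ {t s t' s' : ℝ}, |t - s| ≤ θ → |t' - (t + τ)| ≤ ε → |s' - (s + τ)| ≤ ε →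
      ‖transition X t' s' - transition X t s‖ ≤ (K + 1) * ε := fun hts ht' hs' =>
    (norm_transition_sub_transition_le hC hX hXinv hAτ hε1 hts ht' hs').trans
      (mul_le_mul_of_nonneg_right (le_add_of_nonneg_right zero_le_one) hε0.le)
  have hshift : ∀ m, |ts (m + p) - (ts m + τ)| ≤ ε := fun m => by rw [← sub_sub]; exact hp m
  have hshift₁ : |ts (n + p + 1) - (ts (n + 1) + τ)| ≤ ε := by
    rw [add_right_comm]; exact hshift (n + 1)
  have hzero : ∀ a : ℝ, |a - a| ≤ ε := fun a => by simpa using hε0.le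
  have hab : |ts (n + 1) - ts n| ≤ θ := by
    rw [abs_of_pos (sub_pos.2 (hts (lt_add_one n)))]; exact hgap n
  refine ⟨fun u hu => ?_, fun t ht => ?_, fun t s hst => ?_, estimate hab hshift₁ (hshift n)⟩
  · refine estimate ?_ hshift₁ (hzero _)
    rw [abs_of_nonneg (sub_nonneg.2 hu.2)]; linarith [hgap n, hu.1]
  · refine estimate ?_ (hzero _) (hshift n)
    rw [abs_of_nonneg (sub_nonneg.2 ht.1)]; linarith [hgap n, ht.2]
  · exact estimate hst (hzero _) (hzero _)

/-- uniform `ε`-closeness estimates for translates of the fundamental matrix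
`X(t,s) = X(t) X(s)⁻¹`, with a constant `K'` depending only on `q`, `‖A‖_∞` and `θ`. -/
theorem epsilon_translation_estimates {q : ℕ} (hq : 1 ≤ q)
    (ts : ℤ → ℝ) (hts : StrictMono ts)
    (htop : Tendsto ts atTop atTop) (hbot : Tendsto ts atBot atBot)
    (θ : ℝ) (hθ : IsLUB (Set.range fun n : ℤ => ts (n + 1) - ts n) θ)
    (A : ℝ → Mat q) (hAcont : Continuous A) (hAbdd : ∃ C : ℝ, ∀ t : ℝ, ‖A t‖ ≤ C)
    (X : ℝ → Mat q) (hX : ∀ t : ℝ, HasDerivAt X (A t * X t) t)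
    (hXinv : ∀ t : ℝ, IsUnit (X t)) :
    ∃ K' : ℝ, 0 < K' ∧
      ∀ ε : ℝ, ε ∈ Set.Ioc (0 : ℝ) 1 →
      ∀ τ : ℝ, 0 < τ → (∀ t : ℝ, ‖A (t + τ) - A t‖ ≤ ε) →
      ∀ p : ℤ, (∀ n : ℤ, |ts (n + p) - ts n - τ| ≤ ε) →
      ∀ n : ℤ,
        (∀ u ∈ Set.Icc (ts n) (ts (n + 1)),
          ‖X (ts (n + p + 1)) * (X (u + τ))⁻¹ - X (ts (n + 1)) * (X u)⁻¹‖ ≤ K' * ε) ∧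
        (∀ t ∈ Set.Icc (ts n) (ts (n + 1)),
          ‖X (t + τ) * (X (ts (n + p)))⁻¹ - X t * (X (ts n))⁻¹‖ ≤ K' * ε) ∧
        (∀ t s : ℝ, |t - s| ≤ θ →
          ‖X (t + τ) * (X (s + τ))⁻¹ - X t * (X s)⁻¹‖ ≤ K' * ε) ∧
        ‖X (ts (n + p + 1)) * (X (ts (n + p)))⁻¹ - X (ts (n + 1)) * (X (ts n))⁻¹‖ ≤ K' * ε :=
  epsilon_translation_estimates_general ts hts θ hθ A hAbdd X hX hXinv
end
end

section
/- Assume A and B are almost periodic and the family (t_n^{(k)}) is equipotentially almost periodic. Then the sequence H : ℤ → M_q(ℂ) defined by H(n) = X(t_{n+1}, t_n) + ∫_{t_n}^{t_{n+1}} X(t_{n+1}, u) B(u) du is an almost periodic sequence. -/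
open scoped Matrix
open MeasureTheory Filter

attribute [local instance] Matrix.frobeniusSeminormedAddCommGroup
  Matrix.frobeniusNormedAddCommGroup Matrix.frobeniusNormedSpace
  Matrix.frobeniusNormedRing Matrix.frobeniusNormedAlgebra Matrix.frobeniusIsBoundedSMul

noncomputable section

abbrev Vec (q : ℕ) := EuclideanSpace ℂ (Fin q)

/-- Action of a `q × q` complex matrix on `ℂ^q` with the Euclidean norm. -/
def aMul {q : ℕ} (M : Mat q) (v : Vec q) : Vec q := Matrix.toEuclideanLin M v

/-- A set of reals is relatively dense. -/
def RelDenseR (E : Set ℝ) : Prop :=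
  ∃ l : ℝ, 0 < l ∧ ∀ m : ℝ, (E ∩ Set.Icc m (m + l)).Nonempty

/-- A set of integers is relatively dense in `ℤ`. -/
def RelDenseZ (E : Set ℤ) : Prop :=
  ∃ l : ℤ, 0 < l ∧ ∀ m : ℤ, (E ∩ Set.Icc m (m + l)).Nonempty

/-- Almost periodic (continuous) function on `ℝ`. -/
def APR {E : Type*} [NormedAddCommGroup E] (g : ℝ → E) : Prop :=
  Continuous g ∧ ∀ ε : ℝ, 0 < ε →
    RelDenseR {τ : ℝ | ∀ t : ℝ, ‖g (t + τ) - g t‖ ≤ ε}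

/-- Almost periodic sequence on `ℤ`. -/
def APZ {E : Type*} [NormedAddCommGroup E] (x : ℤ → E) : Prop :=
  ∀ ε : ℝ, 0 < ε → RelDenseZ {τ : ℤ | ∀ n : ℤ, ‖x (n + τ) - x n‖ ≤ ε}

/-- The family `t_n^{(k)} = t_{n+k} - t_n` is equipotentially almost periodic. -/
def EquiAP (ts : ℤ → ℝ) : Prop :=
  ∀ ε : ℝ, 0 < ε → RelDenseZ {T : ℤ | ∀ k n : ℤ,
    |(ts (T + n + k) - ts (T + n)) - (ts (n + k) - ts n)| ≤ ε}



/-! By variation of constants, `H n = Φ (t n) (t (n + 1))`, where `Φ s` solves `Y' = A Y + B`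
with `Y s = 1`. Gronwall's inequality makes `Φ s' t' - Φ s t` uniformly small when `t - s` is
bounded, `c` is a small almost period of `A` and `B`, and `s' ≈ s + c`, `t' ≈ t + c`.
Almost periodicity of `A`, `B` and of the differences `t (n + k) - t n` colours `ℤ` with finitely
many colours so that for `T`, `T'` of the same colour `c = t T - t T'` is such an almost period
and `t (n + T) - t (n + T') ≈ c` for all `n`; hence `T - T'` is an `ε`-almost period of `H`.
Finally, a finite colouring with this property makes the `ε`-almost periods relatively dense:
every `T` differs by one of them from one of finitely many colour representatives. -/

open Set Real

section Gronwall

variable {E : Type*} [NormedAddCommGroup E] [NormedSpace ℝ E] {f f' : ℝ → E} {K ε s t : ℝ}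

theorem gronwallBound_le_mul_exp {δ x : ℝ} (hK : 0 ≤ K) (hε : 0 ≤ ε) :
    gronwallBound δ K ε x ≤ (δ + ε * x) * exp (K * x) := by
  rcases hK.eq_or_lt with rfl | hK
  · simp [gronwallBound_K0]
  rw [gronwallBound_of_K_ne_0 hK.ne']
  -- `exp y - 1 ≤ y * exp y` is `1 - y ≤ exp (-y)` multiplied by `exp y`
  have hexp : exp (K * x) - 1 ≤ K * x * exp (K * x) := by
    have h := add_one_le_exp (-(K * x))
    rw [exp_neg] at h
    have hpos := exp_pos (K * x)
    field_simp at h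
    nlinarith
  have : ε / K * (exp (K * x) - 1) ≤ ε * x * exp (K * x) := by
    rw [div_mul_eq_mul_div, div_le_iff₀ hK]
    nlinarith [mul_le_mul_of_nonneg_left hexp hε]
  nlinarith

theorem norm_le_of_norm_deriv_le_Icc (hK : 0 ≤ K) (hε : 0 ≤ ε) (hst : s ≤ t)
    (hf : ∀ u ∈ Icc s t, HasDerivAt f (f' u) u) (bound : ∀ u ∈ Icc s t, ‖f' u‖ ≤ K * ‖f u‖ + ε) :
    ‖f t‖ ≤ (‖f s‖ + ε * (t - s)) * exp (K * (t - s)) :=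
  (norm_le_gronwallBound_of_norm_deriv_right_le
    (fun u hu => (hf u hu).continuousAt.continuousWithinAt)
    (fun u hu => (hf u (Ico_subset_Icc_self hu)).hasDerivWithinAt) le_rfl
    (fun u hu => bound u (Ico_subset_Icc_self hu)) t (right_mem_Icc.2 hst)).trans
    (gronwallBound_le_mul_exp hK hε)

theorem norm_le_of_norm_deriv_le_uIcc (hK : 0 ≤ K) (hε : 0 ≤ ε)
    (hf : ∀ u ∈ uIcc s t, HasDerivAt f (f' u) u)
    (bound : ∀ u ∈ uIcc s t, ‖f' u‖ ≤ K * ‖f u‖ + ε) :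
    ‖f t‖ ≤ (‖f s‖ + ε * |t - s|) * exp (K * |t - s|) := by
  rcases le_total s t with hst | hts
  · rw [abs_of_nonneg (sub_nonneg.2 hst)]
    rw [uIcc_of_le hst] at hf bound
    exact norm_le_of_norm_deriv_le_Icc hK hε hst hf bound
  · rw [abs_of_nonpos (sub_nonpos.2 hts), neg_sub]
    rw [uIcc_of_ge hts] at hf bound
    have hmem : ∀ u ∈ Icc (-s) (-t), -u ∈ Icc t s := fun u hu =>
      ⟨by linarith [hu.2], by linarith [hu.1]⟩
    have h := norm_le_of_norm_deriv_le_Icc (f := fun u => f (-u))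
      (f' := fun u => (-1 : ℝ) • f' (-u)) hK hε (neg_le_neg hts) (fun u hu => (hf (-u) (hmem u hu)).scomp u (hasDerivAt_neg u))
      (fun u hu => by simpa [norm_smul] using bound (-u) (hmem u hu))
    simpa [sub_eq_neg_add, add_comm] using h

end Gronwall

section AlmostPeriodic

variable {E : Type*} [NormedAddCommGroup E] {g : ℝ → E}

theorem APR.exists_bound (hg : APR g) : ∃ M, ∀ t, ‖g t‖ ≤ M := by
  obtain ⟨l, -, hl⟩ := hg.2 1 one_pos
  obtain ⟨M, hM⟩ := isCompact_Icc.exists_bound_of_continuousOn (hg.1.continuousOn (s := Icc 0 l))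
  refine ⟨M + 1, fun t => ?_⟩
  obtain ⟨τ, hτ, hτl⟩ := hl (-t)
  have hmem : t + τ ∈ Icc 0 l := ⟨by linarith [hτl.1], by linarith [hτl.2]⟩
  calc ‖g t‖ ≤ ‖g (t + τ)‖ + ‖g t - g (t + τ)‖ := norm_le_insert' _ _
    _ ≤ M + 1 := add_le_add (hM _ hmem) (by rw [norm_sub_rev]; exact hτ t)

theorem APR.uniformContinuous (hg : APR g) : UniformContinuous g := by
  rw [Metric.uniformContinuous_iff]
  intro ε hε
  obtain ⟨l, -, hl⟩ := hg.2 (ε / 3) (by positivity)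
  obtain ⟨η, hη, hηg⟩ := Metric.uniformContinuousOn_iff.1
    (isCompact_Icc.uniformContinuousOn_of_continuous (hg.1.continuousOn (s := Icc (-1) (l + 1))))
    (ε / 3) (by positivity)
  refine ⟨min η 1, by positivity, fun {x y} hxy => ?_⟩
  rw [Real.dist_eq, lt_min_iff] at hxy
  obtain ⟨τ, hτ, hτl⟩ := hl (-y)
  -- translating by an `ε / 3`-almost period moves `x` and `y` into a fixed compact window
  have hy : y + τ ∈ Icc (-1) (l + 1) := ⟨by linarith [hτl.1], by linarith [hτl.2]⟩
  have hx : x + τ ∈ Icc (-1) (l + 1) := by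
    obtain ⟨h₁, h₂⟩ := abs_lt.1 hxy.2
    exact ⟨by linarith [hτl.1], by linarith [hτl.2]⟩
  have hxy' : dist (x + τ) (y + τ) < η := by rw [dist_add_right, Real.dist_eq]; exact hxy.1
  calc dist (g x) (g y)
      ≤ dist (g x) (g (x + τ)) + dist (g (x + τ)) (g (y + τ)) + dist (g (y + τ)) (g y) :=
        dist_triangle4 _ _ _ _
    _ < ε := by
        have h₁ : dist (g x) (g (x + τ)) ≤ ε / 3 := by rw [dist_comm, dist_eq_norm]; exact hτ x
        have h₃ : dist (g (y + τ)) (g y) ≤ ε / 3 := by rw [dist_eq_norm]; exact hτ y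
        linarith [hηg _ hx _ hy hxy']

theorem APR.exists_coloring (hg : APR g) {ε : ℝ} (hε : 0 < ε) :
    ∃ κ : ℝ → ℤ, (range κ).Finite ∧
      ∀ r r', κ r = κ r' → ∀ t, ‖g (t + (r - r')) - g t‖ ≤ ε := by
  obtain ⟨l, -, hl⟩ := hg.2 (ε / 3) (by positivity)
  obtain ⟨η, hη, hηg⟩ := Metric.uniformContinuous_iff.1 hg.uniformContinuous (ε / 3)
    (by positivity)
  choose τ hτ hτl using fun r => hl (-r)
  -- `r` is coloured by the cell of the grid `η ℤ` containing `r + τ r ∈ [0, l]`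
  refine ⟨fun r => ⌊(r + τ r) / η⌋, (finite_Icc 0 ⌊l / η⌋).subset ?_, fun r r' hrr' t => ?_⟩
  · rintro _ ⟨r, rfl⟩
    obtain ⟨h₁, h₂⟩ := hτl r
    exact ⟨Int.floor_nonneg.2 (div_nonneg (by linarith) hη.le),
      Int.floor_mono (div_le_div_of_nonneg_right (by linarith) hη.le)⟩
  have hcell : dist (r + τ r) (r' + τ r') < η := by
    have := Int.abs_sub_lt_one_of_floor_eq_floor hrr'
    rwa [← sub_div, abs_div, abs_of_pos hη, div_lt_one hη, ← Real.dist_eq] at this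
  set t₀ := t - r'
  have h₁ : dist (g (t₀ + r)) (g (t₀ + r + τ r)) ≤ ε / 3 := by
    rw [dist_comm, dist_eq_norm]; exact hτ r _
  have h₂ : dist (g (t₀ + r + τ r)) (g (t₀ + r' + τ r')) < ε / 3 := by
    apply hηg
    rwa [add_assoc, add_assoc, dist_add_left]
  have h₃ : dist (g (t₀ + r' + τ r')) (g (t₀ + r')) ≤ ε / 3 := by
    rw [dist_eq_norm]; exact hτ r' _
  calc ‖g (t + (r - r')) - g t‖ = dist (g (t₀ + r)) (g (t₀ + r')) := by
        rw [dist_eq_norm, show t₀ + r = t + (r - r') by ring, show t₀ + r' = t by ring]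
    _ ≤ _ := dist_triangle4 _ _ _ _
    _ ≤ ε := by linarith

end AlmostPeriodic

theorem EquiAP.exists_coloring {ts : ℤ → ℝ} (h : EquiAP ts) {ε : ℝ} (hε : 0 < ε) :
    ∃ κ : ℤ → ℤ, (range κ).Finite ∧
      ∀ T T', κ T = κ T' → ∀ k, |ts (k + T) - ts (k + T') - (ts T - ts T')| ≤ ε := by
  obtain ⟨l, -, hl⟩ := h (ε / 2) (by positivity)
  choose S hS hSl using fun T => hl (-T)
  refine ⟨fun T => S T + T, (finite_Icc 0 l).subset ?_, fun T T' hTT' k => ?_⟩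
  · rintro _ ⟨T, rfl⟩
    obtain ⟨h₁, h₂⟩ := hSl T
    constructor <;> dsimp only <;> omega
  have h₁ := hS T k T
  have h₂ := hS T' k T'
  simp only at hTT'
  rw [hTT'] at h₁
  rw [add_comm k T, add_comm k T']
  rw [abs_le] at h₁ h₂ ⊢
  constructor <;> linarith

theorem relDenseZ_of_coloring {α : Type*} {S : Set ℤ} (κ : ℤ → α) (hκ : (range κ).Finite)
    (h : ∀ T T', κ T = κ T' → T - T' ∈ S) : RelDenseZ S := by
  -- each colour class has a representative, and these finitely many lie in some `[-L, L]`
  set rep := Function.invFun κ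
  obtain ⟨L, hL⟩ := (hκ.image fun c => |rep c|).exists_le
  have hrep : ∀ T, |rep (κ T)| ≤ L := fun T => hL _ ⟨κ T, ⟨T, rfl⟩, rfl⟩
  have hL0 : 0 ≤ L := (abs_nonneg _).trans (hrep 0)
  refine ⟨2 * L + 1, by omega, fun m => ⟨m + L - rep (κ (m + L)), h _ _ ?_, ?_⟩⟩
  · exact (Function.invFun_eq ⟨_, rfl⟩).symm
  · obtain ⟨h₁, h₂⟩ := abs_le.1 (hrep (m + L))
    constructor <;> omega

theorem APZ.of_coloring {E α : Type*} [NormedAddCommGroup E] {x : ℤ → E}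
    (h : ∀ ε > 0, ∃ κ : ℤ → α, (range κ).Finite ∧
      ∀ T T', κ T = κ T' → ∀ n, ‖x (n + T) - x (n + T')‖ ≤ ε) : APZ x := by
  intro ε hε
  obtain ⟨κ, hκ, hclose⟩ := h ε hε
  refine relDenseZ_of_coloring κ hκ fun T T' hTT' n => ?_
  simpa [sub_add_eq_add_sub, add_sub_assoc] using hclose T T' hTT' (n - T')

section AffineODE

variable {R : Type*} [NormedRing R] [NormedAlgebra ℝ R]
  {A B A₁ B₁ A₂ B₂ Y Y₁ Y₂ : ℝ → R} {a b δ M s t : ℝ}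

theorem norm_le_of_hasDerivAt_mul_add (hY : ∀ u ∈ uIcc s t, HasDerivAt Y (A u * Y u + B u) u)
    (hA : ∀ u ∈ uIcc s t, ‖A u‖ ≤ a) (hB : ∀ u ∈ uIcc s t, ‖B u‖ ≤ b) :
    ‖Y t‖ ≤ (‖Y s‖ + b * |t - s|) * exp (a * |t - s|) :=
  norm_le_of_norm_deriv_le_uIcc ((norm_nonneg _).trans (hA s left_mem_uIcc))
    ((norm_nonneg _).trans (hB s left_mem_uIcc)) hY fun u hu =>
      (norm_add_le _ _).trans (add_le_add ((norm_mul_le _ _).trans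
        (mul_le_mul_of_nonneg_right (hA u hu) (norm_nonneg _))) (hB u hu))

theorem norm_sub_le_of_hasDerivAt_mul_add
    (hY₁ : ∀ u ∈ uIcc s t, HasDerivAt Y₁ (A₁ u * Y₁ u + B₁ u) u)
    (hY₂ : ∀ u ∈ uIcc s t, HasDerivAt Y₂ (A₂ u * Y₂ u + B₂ u) u)
    (hA₂ : ∀ u ∈ uIcc s t, ‖A₂ u‖ ≤ a) (hA : ∀ u ∈ uIcc s t, ‖A₁ u - A₂ u‖ ≤ δ)
    (hB : ∀ u ∈ uIcc s t, ‖B₁ u - B₂ u‖ ≤ δ) (hM : ∀ u ∈ uIcc s t, ‖Y₁ u‖ ≤ M) :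
    ‖Y₁ t - Y₂ t‖ ≤ (‖Y₁ s - Y₂ s‖ + δ * (M + 1) * |t - s|) * exp (a * |t - s|) := by
  have hM₀ : 0 ≤ M := (norm_nonneg _).trans (hM s left_mem_uIcc)
  have hδ : 0 ≤ δ := (norm_nonneg _).trans (hA s left_mem_uIcc)
  refine norm_le_of_norm_deriv_le_uIcc ((norm_nonneg _).trans (hA₂ s left_mem_uIcc))
    (by positivity) (fun u hu => (hY₁ u hu).sub (hY₂ u hu)) fun u hu => ?_
  calc ‖A₁ u * Y₁ u + B₁ u - (A₂ u * Y₂ u + B₂ u)‖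
      = ‖A₂ u * (Y₁ u - Y₂ u) + ((A₁ u - A₂ u) * Y₁ u + (B₁ u - B₂ u))‖ := by
        congr 1; noncomm_ring
    _ ≤ ‖A₂ u‖ * ‖Y₁ u - Y₂ u‖ + (‖A₁ u - A₂ u‖ * ‖Y₁ u‖ + ‖B₁ u - B₂ u‖) :=
        (norm_add_le _ _).trans (add_le_add (norm_mul_le _ _)
          ((norm_add_le _ _).trans (add_le_add_left (norm_mul_le _ _) _)))
    _ ≤ a * ‖Y₁ u - Y₂ u‖ + (δ * M + δ) := by
        gcongr
        exacts [hA₂ u hu, hA u hu, hM u hu, hB u hu]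
    _ = a * ‖Y₁ u - Y₂ u‖ + δ * (M + 1) := by ring

variable {Φ : ℝ → ℝ → R}

theorem norm_propagator_le (hΦ : ∀ s t, HasDerivAt (Φ s) (A t * Φ s t + B t) t)
    (hΦ₁ : ∀ s, Φ s s = 1) (hA : ∀ u, ‖A u‖ ≤ a) (hB : ∀ u, ‖B u‖ ≤ b) {r : ℝ}
    (h : |t - s| ≤ r) : ‖Φ s t‖ ≤ (‖(1 : R)‖ + b * r) * exp (a * r) := by
  have ha : 0 ≤ a := (norm_nonneg _).trans (hA 0)
  have hb : 0 ≤ b := (norm_nonneg _).trans (hB 0)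
  have hr : 0 ≤ r := (abs_nonneg _).trans h
  calc ‖Φ s t‖ ≤ (‖Φ s s‖ + b * |t - s|) * exp (a * |t - s|) :=
        norm_le_of_hasDerivAt_mul_add (fun u _ => hΦ s u) (fun u _ => hA u) (fun u _ => hB u)
    _ ≤ _ := by
        rw [hΦ₁]
        gcongr

theorem norm_propagator_sub_le (hΦ : ∀ s t, HasDerivAt (Φ s) (A t * Φ s t + B t) t)
    (hΦ₁ : ∀ s, Φ s s = 1) (hA : ∀ u, ‖A u‖ ≤ a) (hB : ∀ u, ‖B u‖ ≤ b) {r v w : ℝ}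
    (hv : |v - s| ≤ r) (hw : |w - s| ≤ r) :
    ‖Φ s v - Φ s w‖ ≤ (a * ((‖(1 : R)‖ + b * r) * exp (a * r)) + b) * |v - w| := by
  have ha : 0 ≤ a := (norm_nonneg _).trans (hA 0)
  have hderiv : ∀ u ∈ Icc (s - r) (s + r),
      ‖A u * Φ s u + B u‖ ≤ a * ((‖(1 : R)‖ + b * r) * exp (a * r)) + b := fun u hu =>
    (norm_add_le _ _).trans (add_le_add ((norm_mul_le _ _).trans (mul_le_mul (hA u)
      (norm_propagator_le hΦ hΦ₁ hA hB (abs_sub_le_iff.2 ⟨by linarith [hu.2], by linarith [hu.1]⟩))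
      (norm_nonneg _) ha)) (hB u))
  have hmem : ∀ x, |x - s| ≤ r → x ∈ Icc (s - r) (s + r) := fun x hx =>
    ⟨by linarith [(abs_le.1 hx).1], by linarith [(abs_le.1 hx).2]⟩
  simpa only [Real.norm_eq_abs] using Convex.norm_image_sub_le_of_norm_hasDerivWithin_le
    (fun u _ => (hΦ s u).hasDerivWithinAt) hderiv (convex_Icc _ _) (hmem w hw) (hmem v hv)

theorem exists_norm_propagator_sub_le (hΦ : ∀ s t, HasDerivAt (Φ s) (A t * Φ s t + B t) t)
    (hΦ₁ : ∀ s, Φ s s = 1) (hA : ∀ u, ‖A u‖ ≤ a) (hB : ∀ u, ‖B u‖ ≤ b) {θ : ℝ} (hθ : 0 ≤ θ) :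
    ∃ C, 0 ≤ C ∧ ∀ s s' t t' c δ, δ ≤ 1 → |t - s| ≤ θ → |s' - s - c| ≤ δ → |t' - t - c| ≤ δ →
      (∀ u, ‖A (u + c) - A u‖ ≤ δ) → (∀ u, ‖B (u + c) - B u‖ ≤ δ) →
      ‖Φ s' t' - Φ s t‖ ≤ C * δ := by
  have ha : 0 ≤ a := (norm_nonneg _).trans (hA 0)
  have hb : 0 ≤ b := (norm_nonneg _).trans (hB 0)
  set M := (‖(1 : R)‖ + b * (θ + 2)) * exp (a * (θ + 2))
  set L := a * M + b
  have hM : 0 ≤ M := by positivity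
  refine ⟨L + (L + (M + 1) * θ) * exp (a * θ), by positivity,
    fun s s' t t' c δ hδ₁ hst hs ht hAc hBc => ?_⟩
  have hδ : 0 ≤ δ := (abs_nonneg _).trans hs
  have hst' := abs_le.1 hst
  have hs' := abs_le.1 hs
  have ht' := abs_le.1 ht
  have hstart : ‖Φ s' (s + c) - Φ s s‖ ≤ L * δ := by
    rw [hΦ₁ s, ← hΦ₁ s']
    refine (norm_propagator_sub_le hΦ hΦ₁ hA hB (r := θ + 2) ?_
      (by rw [sub_self, abs_zero]; linarith)).trans ?_
    · rw [abs_le]; constructor <;> linarith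
    · gcongr
      rw [abs_le]; constructor <;> linarith
  -- the solution started at `s'`, translated back by `c`, nearly solves the equation of `Φ s`
  have hshift : ‖Φ s' (t + c) - Φ s t‖ ≤ (L * δ + δ * (M + 1) * θ) * exp (a * θ) := by
    refine (norm_sub_le_of_hasDerivAt_mul_add (Y₁ := fun u => Φ s' (u + c))
      (A₁ := fun u => A (u + c)) (B₁ := fun u => B (u + c)) (Y₂ := Φ s) (s := s)
      (fun u _ => (hΦ s' (u + c)).comp_add_const u c) (fun u _ => hΦ s u) (fun u _ => hA u)
      (fun u _ => hAc u) (fun u _ => hBc u)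
      (fun u hu => norm_propagator_le hΦ hΦ₁ hA hB (r := θ + 2) ?_)).trans ?_
    · have := abs_le.1 ((abs_sub_left_of_mem_uIcc hu).trans hst)
      rw [abs_le]; constructor <;> linarith
    · gcongr
  have hend : ‖Φ s' t' - Φ s' (t + c)‖ ≤ L * δ := by
    refine (norm_propagator_sub_le hΦ hΦ₁ hA hB (r := θ + 2) ?_ ?_).trans ?_
    · rw [abs_le]; constructor <;> linarith
    · rw [abs_le]; constructor <;> linarith
    · gcongr
      rw [abs_le]; constructor <;> linarith
  calc ‖Φ s' t' - Φ s t‖ ≤ ‖Φ s' t' - Φ s' (t + c)‖ + ‖Φ s' (t + c) - Φ s t‖ :=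
        norm_sub_le_norm_sub_add_norm_sub _ _ _
    _ ≤ L * δ + (L * δ + δ * (M + 1) * θ) * exp (a * θ) := add_le_add hend hshift
    _ = _ := by ring

theorem exists_pos_norm_propagator_sub_le (hΦ : ∀ s t, HasDerivAt (Φ s) (A t * Φ s t + B t) t)
    (hΦ₁ : ∀ s, Φ s s = 1) (hA : ∀ u, ‖A u‖ ≤ a) (hB : ∀ u, ‖B u‖ ≤ b) {θ : ℝ} (hθ : 0 ≤ θ)
    {ε : ℝ} (hε : 0 < ε) :
    ∃ δ > 0, ∀ s s' t t' c, |t - s| ≤ θ → |s' - s - c| ≤ δ → |t' - t - c| ≤ δ →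
      (∀ u, ‖A (u + c) - A u‖ ≤ δ) → (∀ u, ‖B (u + c) - B u‖ ≤ δ) →
      ‖Φ s' t' - Φ s t‖ ≤ ε := by
  obtain ⟨C, hC, hΦC⟩ := exists_norm_propagator_sub_le hΦ hΦ₁ hA hB hθ
  refine ⟨min 1 (ε / (C + 1)), by positivity, fun s s' t t' c hst hs ht hAc hBc => ?_⟩
  calc ‖Φ s' t' - Φ s t‖ ≤ C * min 1 (ε / (C + 1)) :=
        hΦC s s' t t' c _ (min_le_left _ _) hst hs ht hAc hBc
    _ ≤ (C + 1) * (ε / (C + 1)) := by gcongr <;> first | linarith | exact min_le_right _ _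
    _ = ε := by field_simp

end AffineODE

section Matrix

variable {q : ℕ} {A B X : ℝ → Mat q}

/-- The solution of `Y' = A Y + B`, `Y s = 1`, by variation of constants. -/
def duhamel (X B : ℝ → Mat q) (s t : ℝ) : Mat q :=
  X t * (X s)⁻¹ + ∫ u in s..t, X t * (X u)⁻¹ * B u

theorem duhamel_self (hXinv : ∀ t, IsUnit (X t)) (s : ℝ) : duhamel X B s s = 1 := by
  simp [duhamel, Matrix.mul_nonsing_inv _ ((Matrix.isUnit_iff_isUnit_det _).1 (hXinv s))]

theorem continuous_inv_of_hasDerivAt (hX : ∀ t, HasDerivAt X (A t * X t) t)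
    (hXinv : ∀ t, IsUnit (X t)) : Continuous fun t => (X t)⁻¹ :=
  continuous_iff_continuousAt.2 fun t =>
    (continuousAt_matrix_inv _ (NormedRing.inverse_continuousAt
      ((Matrix.isUnit_iff_isUnit_det _).1 (hXinv t)).unit)).comp (hX t).continuousAt

theorem hasDerivAt_duhamel (hX : ∀ t, HasDerivAt X (A t * X t) t) (hXinv : ∀ t, IsUnit (X t))
    (hB : Continuous B) (s t : ℝ) :
    HasDerivAt (duhamel X B s) (A t * duhamel X B s t + B t) t := by
  have hf : Continuous fun u => (X u)⁻¹ * B u :=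
    (continuous_inv_of_hasDerivAt hX hXinv).mul hB
  have hfactor : duhamel X B s = fun t => X t * ((X s)⁻¹ + ∫ u in s..t, (X u)⁻¹ * B u) := by
    ext1 t
    rw [duhamel, mul_add]
    congr 1
    simpa only [ContinuousLinearMap.mul_apply', mul_assoc] using
      (ContinuousLinearMap.mul ℝ (Mat q) (X t)).intervalIntegral_comp_comm
        (hf.intervalIntegrable s t)
  rw [hfactor]
  refine ((hX t).mul ((hf.integral_hasStrictDerivAt s t).hasDerivAt.const_add _)).congr_deriv ?_
  beta_reduce
  rw [← mul_assoc (X t), Matrix.mul_nonsing_inv _ ((Matrix.isUnit_iff_isUnit_det _).1 (hXinv t)),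
    one_mul, mul_assoc]

end Matrix

theorem H_is_almost_periodic_general {q : ℕ}
    (ts : ℤ → ℝ) (hts : StrictMono ts)
    (hbdd : BddAbove (Set.range fun n : ℤ => ts (n + 1) - ts n))
    (A B : ℝ → Mat q) (hA : APR A) (hB : APR B) (hEqui : EquiAP ts)
    (X : ℝ → Mat q) (hX : ∀ t : ℝ, HasDerivAt X (A t * X t) t)
    (hXinv : ∀ t : ℝ, IsUnit (X t)) :
    APZ (fun n : ℤ => X (ts (n + 1)) * (X (ts n))⁻¹ +
      ∫ u in (ts n)..(ts (n + 1)), X (ts (n + 1)) * (X u)⁻¹ * B u) := by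
  obtain ⟨θ, hθ⟩ := hbdd
  have hstep : ∀ n, |ts (n + 1) - ts n| ≤ θ := fun n =>
    abs_le.2 ⟨by linarith [hts (lt_add_one n), hθ ⟨n, rfl⟩], hθ ⟨n, rfl⟩⟩
  obtain ⟨a, ha⟩ := hA.exists_bound
  obtain ⟨b, hb⟩ := hB.exists_bound
  refine APZ.of_coloring (α := ℤ × ℤ × ℤ) fun ε hε => ?_
  obtain ⟨δ, hδ, hH⟩ := exists_pos_norm_propagator_sub_le (hasDerivAt_duhamel hX hXinv hB.1)
    (duhamel_self hXinv) ha hb ((abs_nonneg _).trans (hstep 0)) hε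
  obtain ⟨κt, hκt, hκt_close⟩ := hEqui.exists_coloring hδ
  obtain ⟨κA, hκA, hκA_close⟩ := hA.exists_coloring hδ
  obtain ⟨κB, hκB, hκB_close⟩ := hB.exists_coloring hδ
  refine ⟨fun T => (κt T, κA (ts T), κB (ts T)), (hκt.prod (hκA.prod hκB)).subset ?_,
    fun T T' hTT' n => ?_⟩
  · rintro _ ⟨T, rfl⟩
    exact ⟨⟨T, rfl⟩, ⟨ts T, rfl⟩, ⟨ts T, rfl⟩⟩
  simp only [Prod.mk.injEq] at hTT'
  obtain ⟨ht, hA', hB'⟩ := hTT'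
  exact hH (ts (n + T')) (ts (n + T)) (ts (n + T' + 1)) (ts (n + T + 1)) (ts T - ts T')
    (hstep _) (hκt_close T T' ht n)
    (by simpa only [add_right_comm] using hκt_close T T' ht (n + 1))
    (hκA_close _ _ hA') (hκB_close _ _ hB')

/-- if `A`, `B` are almost periodic and `(t_n^{(k)})` is equipotentially
almost periodic, the sequence `H(n) = X(t_{n+1},t_n) + ∫_{t_n}^{t_{n+1}} X(t_{n+1},u) B(u) du`
is an almost periodic sequence. -/
theorem H_is_almost_periodic {q : ℕ} (hq : 1 ≤ q)
    (ts : ℤ → ℝ) (hts : StrictMono ts)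
    (htop : Tendsto ts atTop atTop) (hbot : Tendsto ts atBot atBot)
    (hbdd : BddAbove (Set.range fun n : ℤ => ts (n + 1) - ts n))
    (A B : ℝ → Mat q) (hA : APR A) (hB : APR B) (hEqui : EquiAP ts)
    (X : ℝ → Mat q) (hX : ∀ t : ℝ, HasDerivAt X (A t * X t) t)
    (hXinv : ∀ t : ℝ, IsUnit (X t)) :
    APZ (fun n : ℤ => X (ts (n + 1)) * (X (ts n))⁻¹ +
      ∫ u in (ts n)..(ts (n + 1)), X (ts (n + 1)) * (X u)⁻¹ * B u) :=
  H_is_almost_periodic_general ts hts hbdd A B hA hB hEqui X hX hXinv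
end
end

section
/- A sequence x : ℤ → ℂ^q is almost periodic if and only if for every pair of integer sequences (k'_j)_{j≥1} and (ℓ'_j)_{j≥1} there exist subsequences (k_j) of (k'_j) and (ℓ_j) of (ℓ'_j), taken with the same indices, such that the limits T_ℓ x(n) = lim_{j→∞} x(n + ℓ_j), T_k(T_ℓ x)(n) = lim_{j→∞} (T_ℓ x)(n + k_j), and T_{k+ℓ} x(n) = lim_{j→∞} x(n + k_j + ℓ_j) all exist uniformly in n ∈ ℤ and satisfy T_k T_ℓ x = T_{k+ℓ} x. -/
open Filter

noncomputable section

noncomputable section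

-- auxiliary lemma: if T has arbitrarily long gaps, there's a sequence whose
-- differences all avoid T
lemma exists_bad_seq (T : Set ℤ)
    (hNT : ∀ l : ℤ, 0 < l → ∃ m : ℤ, ∀ t ∈ Set.Icc m (m + l), t ∉ T) :
    ∃ h : ℕ → ℤ, ∀ i j : ℕ, i < j → h j - h i ∉ T := by
  have hstep' : ∀ s : Finset ℤ, ∃ v : ℤ, ∀ a ∈ insert (0:ℤ) s, v - a ∉ T := by
    intro s
    set t : Finset ℤ := insert (0:ℤ) s with ht
    have htne : t.Nonempty := ⟨0, Finset.mem_insert_self _ _⟩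
    set l : ℤ := t.max' htne - t.min' htne + 1 with hldef
    have hminmax : t.min' htne ≤ t.max' htne :=
      Finset.min'_le _ _ (t.max'_mem htne)
    have hl : 0 < l := by omega
    obtain ⟨m, hm⟩ := hNT l hl
    refine ⟨m + t.max' htne, fun a ha => ?_⟩
    have h1 : a ≤ t.max' htne := Finset.le_max' _ _ ha
    have h2 : t.min' htne ≤ a := Finset.min'_le _ _ ha
    exact hm (m + t.max' htne - a) ⟨by omega, by omega⟩
  choose step hstep using hstep'
  set H : ℕ → Finset ℤ := fun n => Nat.rec {0} (fun k s => insert (step s) s) n with hH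
  have hHsucc : ∀ k, H (k+1) = insert (step (H k)) (H k) := fun k => rfl
  have hHmono : ∀ i j : ℕ, i ≤ j → H i ⊆ H j := by
    intro i j hij
    induction j with
    | zero => simp_all
    | succ k ih =>
      rcases Nat.lt_or_ge i (k+1) with h | h
      · exact (ih (by omega)).trans (by rw [hHsucc]; exact Finset.subset_insert _ _)
      · have : i = k + 1 := by omega
        subst this; exact subset_rfl
  set h : ℕ → ℤ := fun n => if hn : n = 0 then 0 else step (H (n - 1)) with hh
  have hmem : ∀ n, h n ∈ H n := by
    intro n
    cases n with
    | zero => simp [hh, hH]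
    | succ k =>
      rw [hHsucc]
      simp only [hh]
      rw [dif_neg (Nat.succ_ne_zero k)]
      simp
  refine ⟨h, fun i j hij => ?_⟩
  obtain ⟨k, rfl⟩ : ∃ k, j = k + 1 := ⟨j - 1, by omega⟩
  have hik : h i ∈ H k := hHmono i k (by omega) (hmem i)
  have hj : h (k+1) = step (H k) := by
    simp only [hh]; rw [dif_neg (Nat.succ_ne_zero k)]; rfl
  rw [hj]
  exact hstep (H k) (h i) (Finset.mem_insert_of_mem hik)

set_option synthInstance.maxHeartbeats 1000000 in
/-- Bochner-type criterion. -/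
theorem bochner_criterion_for_sequences {q : ℕ} (hq : 1 ≤ q) (x : ℤ → Vec q) :
    APZ x ↔
      ∀ k' l' : ℕ → ℤ, ∃ φ : ℕ → ℕ, StrictMono φ ∧
        ∃ Tl Tkl Tkpl : ℤ → Vec q,
          TendstoUniformly (fun j (n : ℤ) => x (n + l' (φ j))) Tl atTop ∧
          TendstoUniformly (fun j (n : ℤ) => Tl (n + k' (φ j))) Tkl atTop ∧
          TendstoUniformly (fun j (n : ℤ) => x (n + k' (φ j) + l' (φ j))) Tkpl atTop ∧
          Tkl = Tkpl := by
  constructor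
  · -- forward direction
    intro hap k' l'
    -- x is bounded
    obtain ⟨l1, hl1, hT1⟩ := hap 1 one_pos
    have hne : (Finset.Icc (0:ℤ) l1).Nonempty := Finset.nonempty_Icc.mpr hl1.le
    set C : ℝ := (Finset.Icc (0:ℤ) l1).sup' hne (fun m => ‖x m‖) + 1 with hCdef
    have hxC : ∀ n : ℤ, ‖x n‖ ≤ C := by
      intro n
      obtain ⟨τ, hτT, hτI⟩ := hT1 (n - l1)
      have hτ1 : n - l1 ≤ τ := hτI.1
      have hτ2 : τ ≤ n := by have := hτI.2; omega
      have h0 : n - τ ∈ Finset.Icc (0:ℤ) l1 := by rw [Finset.mem_Icc]; omega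
      have h1 : ‖x ((n - τ) + τ) - x (n - τ)‖ ≤ 1 := hτT (n - τ)
      have h2 : (n - τ) + τ = n := by ring
      rw [h2] at h1
      have h3 : ‖x (n - τ)‖ ≤ (Finset.Icc (0:ℤ) l1).sup' hne (fun m => ‖x m‖) :=
        Finset.le_sup' (fun m => ‖x m‖) h0
      have hdec : x n = (x n - x (n - τ)) + x (n - τ) := by abel
      calc ‖x n‖ = ‖(x n - x (n - τ)) + x (n - τ)‖ := by rw [← hdec]
        _ ≤ ‖x n - x (n - τ)‖ + ‖x (n - τ)‖ := norm_add_le _ _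
        _ ≤ C := by rw [hCdef]; linarith
    -- translates as bounded functions
    set X : ℤ → BoundedContinuousFunction ℤ (Vec q) := fun τ =>
      BoundedContinuousFunction.ofNormedAddCommGroup (fun n => x (n + τ))
        (continuous_of_discreteTopology) C (fun n => hxC _) with hXdef
    have hXcoe : ∀ τ n, X τ n = x (n + τ) := fun τ n => rfl
    -- the set of translates is totally bounded
    have htb : TotallyBounded (Set.range X) := by
      rw [Metric.totallyBounded_iff]
      intro ε hε
      obtain ⟨L, hL, hT⟩ := hap (ε/2) (half_pos hε)
      refine ⟨X '' (Set.Icc 0 L), (Set.finite_Icc (0:ℤ) L).image X, ?_⟩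
      rintro _ ⟨τ, rfl⟩
      obtain ⟨p, hpT, hpI⟩ := hT (τ - L)
      have hp1 : τ - L ≤ p := hpI.1
      have hp2 : p ≤ τ := by have := hpI.2; omega
      refine Set.mem_iUnion₂.mpr ⟨X (τ - p), ⟨τ - p, ⟨by omega, by omega⟩, rfl⟩, ?_⟩
      rw [Metric.mem_ball]
      have hd : dist (X τ) (X (τ - p)) ≤ ε/2 := by
        rw [BoundedContinuousFunction.dist_le (half_pos hε).le]
        intro n
        rw [hXcoe, hXcoe, dist_eq_norm]
        have := hpT (n + (τ - p))
        have he : n + (τ - p) + p = n + τ := by ring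
        rw [he] at this
        exact this
      linarith
    have hK : IsCompact (closure (Set.range X)) :=
      TotallyBounded.isCompact_of_isClosed htb.closure isClosed_closure
    -- first extraction
    obtain ⟨F, -, φ₁, hφ₁, hF⟩ := hK.tendsto_subseq
      (x := fun j => X (l' j)) (fun j => subset_closure (Set.mem_range_self _))
    -- second extraction
    obtain ⟨G, -, φ₂, hφ₂, hG⟩ := hK.tendsto_subseq
      (x := fun j => X (k' (φ₁ j) + l' (φ₁ j))) (fun j => subset_closure (Set.mem_range_self _))
    set φ : ℕ → ℕ := φ₁ ∘ φ₂ with hφdef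
    have hφ : StrictMono φ := hφ₁.comp hφ₂
    have hF' : Tendsto (fun j => X (l' (φ j))) atTop (nhds F) :=
      hF.comp hφ₂.tendsto_atTop
    have hG' : Tendsto (fun j => X (k' (φ j) + l' (φ j))) atTop (nhds G) := hG
    have h1 : ∀ ε : ℝ, 0 < ε → ∀ᶠ j in atTop, dist (X (l' (φ j))) F < ε := by
      intro ε hε
      have := hF' (Metric.ball_mem_nhds F hε)
      simpa [Metric.mem_ball] using this
    have h2 : ∀ ε : ℝ, 0 < ε → ∀ᶠ j in atTop, dist (X (k' (φ j) + l' (φ j))) G < ε := by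
      intro ε hε
      have := hG' (Metric.ball_mem_nhds G hε)
      simpa [Metric.mem_ball] using this
    refine ⟨φ, hφ, F, G, G, ?_, ?_, ?_, rfl⟩
    · rw [Metric.tendstoUniformly_iff]
      intro ε hε
      filter_upwards [h1 ε hε] with j hj n
      calc dist (F n) (x (n + l' (φ j))) = dist (X (l' (φ j)) n) (F n) := by
            rw [hXcoe, dist_comm]
        _ ≤ dist (X (l' (φ j))) F := BoundedContinuousFunction.dist_coe_le_dist n
        _ < ε := hj
    · rw [Metric.tendstoUniformly_iff]
      intro ε hε
      filter_upwards [h1 (ε/2) (half_pos hε), h2 (ε/2) (half_pos hε)] with j hj1 hj2 n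
      have e1 : dist (G n) (x (n + k' (φ j) + l' (φ j))) < ε/2 := by
        have : dist (X (k' (φ j) + l' (φ j)) n) (G n) ≤ dist (X (k' (φ j) + l' (φ j))) G :=
          BoundedContinuousFunction.dist_coe_le_dist n
        rw [hXcoe] at this
        have he : n + (k' (φ j) + l' (φ j)) = n + k' (φ j) + l' (φ j) := by ring
        rw [he] at this
        rw [dist_comm]
        linarith
      have e2 : dist (x (n + k' (φ j) + l' (φ j))) (F (n + k' (φ j))) < ε/2 := by
        have : dist (X (l' (φ j)) (n + k' (φ j))) (F (n + k' (φ j)))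
            ≤ dist (X (l' (φ j))) F := BoundedContinuousFunction.dist_coe_le_dist _
        rw [hXcoe] at this
        linarith
      calc dist (G n) (F (n + k' (φ j)))
          ≤ dist (G n) (x (n + k' (φ j) + l' (φ j)))
            + dist (x (n + k' (φ j) + l' (φ j))) (F (n + k' (φ j))) := dist_triangle _ _ _
        _ < ε := by linarith
    · rw [Metric.tendstoUniformly_iff]
      intro ε hε
      filter_upwards [h2 ε hε] with j hj n
      have : dist (X (k' (φ j) + l' (φ j)) n) (G n) ≤ dist (X (k' (φ j) + l' (φ j))) G :=
        BoundedContinuousFunction.dist_coe_le_dist n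
      rw [hXcoe] at this
      have he : n + (k' (φ j) + l' (φ j)) = n + k' (φ j) + l' (φ j) := by ring
      rw [he] at this
      rw [dist_comm]
      linarith
  · -- backward direction
    intro H ε hε
    by_contra hnd
    set T : Set ℤ := {τ : ℤ | ∀ n : ℤ, ‖x (n + τ) - x n‖ ≤ ε} with hTdef
    have hNT : ∀ l : ℤ, 0 < l → ∃ m : ℤ, ∀ t ∈ Set.Icc m (m + l), t ∉ T := by
      intro l hl
      by_contra hc
      push_neg at hc
      refine hnd ⟨l, hl, fun m => ?_⟩
      obtain ⟨t, htI, htT⟩ := hc m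
      exact ⟨t, htT, htI⟩
    obtain ⟨hs, hbad⟩ := exists_bad_seq T hNT
    obtain ⟨φ, hφ, Tl, _, _, hTl, -, -, -⟩ := H (fun _ => 0) hs
    rw [Metric.tendstoUniformly_iff] at hTl
    obtain ⟨N, hN⟩ := eventually_atTop.mp (hTl (ε/2) (half_pos hε))
    have hmemT : hs (φ (N+1)) - hs (φ N) ∈ T := by
      intro n
      have d1 := hN (N+1) (by omega) (n - hs (φ N))
      have d2 := hN N le_rfl (n - hs (φ N))
      have e1 : n - hs (φ N) + hs (φ (N+1)) = n + (hs (φ (N+1)) - hs (φ N)) := by ring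
      have e2 : n - hs (φ N) + hs (φ N) = n := by ring
      rw [e1] at d1
      rw [e2] at d2
      rw [← dist_eq_norm]
      calc dist (x (n + (hs (φ (N+1)) - hs (φ N)))) (x n)
          ≤ dist (Tl (n - hs (φ N))) (x (n + (hs (φ (N+1)) - hs (φ N))))
            + dist (Tl (n - hs (φ N))) (x n) := dist_triangle_left _ _ _
        _ ≤ ε := by linarith
    exact hbad (φ N) (φ (N+1)) (hφ (lt_add_one N)) hmemT
end
end
end

section
/- Let H : ℤ → M_q(ℂ) be an almost periodic sequence with every H(n) invertible, let Φ be a fundamental matrix of φ(n+1) = H(n)φ(n), and assume the difference equation has an exponential dichotomy with data (Π, K, ρ). Let h : ℤ → ℂ^q be an almost periodic sequence. Then for every n ∈ ℤ the series c(n) = Σ_{k∈ℤ} 𝒢(n,k) h(k) converges absolutely, the sequence c is the unique bounded solution of c(n+1) = H(n)c(n) + h(n), c is almost periodic, and sup_{n∈ℤ}|c(n)| ≤ (2K/(1−ρ)) · sup_{n∈ℤ}|h(n)|. -/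
/-!
The Green matrix satisfies `𝒢(n+1,k) = H(n)𝒢(n,k) + δ_{nk}` and `|𝒢(n,k)| ≤ Kρ^|n-k|`, so
`c(n) = Σ_k 𝒢(n,k)h(k)` converges absolutely, solves the equation, and is bounded by
`K(1+ρ)/(1-ρ) · sup|h|`. A bounded solution `d` of the homogeneous equation vanishes: the two
dichotomy components of `d(n)` equal `𝒢(n,k)d(k+1)` for every `k < n` and `-𝒢(n,k)d(k+1)` for
every `k ≥ n`, which decay as `k → ∓∞`. Hence bounded solutions are unique. Finally, if `τ` is a
common `δ`-almost period of `H` and `h`, then `c(·+τ) - c` is the bounded solution of the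
equation forced by `(H(·+τ) - H)c(·+τ) + h(·+τ) - h`, which is `O(δ)`; so `τ` is an
`O(δ)`-almost period of `c`.
-/

open scoped Matrix
open MeasureTheory Filter

attribute [local instance] Matrix.frobeniusSeminormedAddCommGroup
  Matrix.frobeniusNormedAddCommGroup Matrix.frobeniusNormedSpace
  Matrix.frobeniusNormedRing Matrix.frobeniusNormedAlgebra Matrix.frobeniusIsBoundedSMul

noncomputable section

/-- The Green matrix of an exponential dichotomy for `φ(n+1) = H(n)φ(n)` with
fundamental matrix `Φ` and projection `P`. -/
def green {q : ℕ} (Φ : ℤ → Mat q) (P : Mat q) (n k : ℤ) : Mat q :=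
  if k < n then Φ n * P * (Φ (k + 1))⁻¹ else -(Φ n * (1 - P) * (Φ (k + 1))⁻¹)


variable {q : ℕ}

section aMul

lemma norm_aMul_le (M : Mat q) (v : Vec q) : ‖aMul M v‖ ≤ ‖M‖ * ‖v‖ := by
  have hcol : ∀ w : Vec q, ‖w‖ = ‖Matrix.replicateCol (Fin 1) (WithLp.ofLp w)‖ := fun w =>
    (Matrix.frobenius_norm_replicateCol _).symm
  rw [hcol, hcol v]
  exact (Matrix.replicateCol_mulVec M _).symm ▸ Matrix.frobenius_norm_mul _ _

lemma mul_aMul (A B : Mat q) (v : Vec q) : aMul (A * B) v = aMul A (aMul B v) := by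
  simp [aMul, Matrix.toLpLin_apply, Matrix.mulVec_mulVec]

lemma one_aMul (v : Vec q) : aMul 1 v = v := by
  simp [aMul]

lemma add_aMul (A B : Mat q) (v : Vec q) : aMul (A + B) v = aMul A v + aMul B v := by
  simp [aMul]

lemma neg_aMul (A : Mat q) (v : Vec q) : aMul (-A) v = -aMul A v := by
  simp [aMul]

lemma sub_aMul (A B : Mat q) (v : Vec q) : aMul (A - B) v = aMul A v - aMul B v := by
  simp [aMul]

lemma aMul_sub (A : Mat q) (v w : Vec q) : aMul A (v - w) = aMul A v - aMul A w := by
  simp [aMul]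

lemma aMul_eq_toEuclideanCLM (M : Mat q) (v : Vec q) :
    aMul M v = Matrix.toEuclideanCLM (𝕜 := ℂ) M v := rfl

end aMul

lemma hasSum_pow_natAbs {ρ : ℝ} (hρ0 : 0 ≤ ρ) (hρ1 : ρ < 1) :
    HasSum (fun j : ℤ => ρ ^ j.natAbs) ((1 + ρ) / (1 - ρ)) := by
  have hgeom := hasSum_geometric_of_lt_one hρ0 hρ1
  have hneg : HasSum (fun n : ℕ => ρ ^ (-((n : ℤ) + 1)).natAbs) (ρ * (1 - ρ)⁻¹) := by
    simpa only [Int.natAbs_neg, ← Nat.cast_succ, Int.natAbs_natCast, ← pow_succ'] using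
      hgeom.mul_left ρ
  convert HasSum.of_nat_of_neg_add_one (f := fun j : ℤ => ρ ^ j.natAbs) hgeom hneg using 1
  field_simp [(sub_pos.2 hρ1).ne']

lemma eq_zero_of_forall_norm_le_mul_pow {E : Type*} [NormedAddCommGroup E] {x : E} {C ρ : ℝ}
    (hρ0 : 0 ≤ ρ) (hρ1 : ρ < 1) (h : ∀ j : ℕ, 0 < j → ‖x‖ ≤ C * ρ ^ j) : x = 0 := by
  refine norm_le_zero_iff.mp (ge_of_tendsto ?_ (eventually_atTop.2 ⟨1, h⟩))
  simpa using (tendsto_pow_atTop_nhds_zero_of_lt_one hρ0 hρ1).const_mul C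

section Green

variable {H Φ : ℤ → Mat q} {P : Mat q}

lemma green_succ (hΦinv : ∀ n, IsUnit (Φ n)) (hΦ : ∀ n, Φ (n + 1) = H n * Φ n) (n k : ℤ) :
    green Φ P (n + 1) k = H n * green Φ P n k + if k = n then 1 else 0 := by
  rcases lt_trichotomy k n with hk | rfl | hk
  · rw [green, green, if_pos hk, if_pos (hk.trans (lt_add_one n)), if_neg hk.ne, add_zero, hΦ n]
    simp only [Matrix.mul_assoc]
  · have hinv : Φ (k + 1) * (Φ (k + 1))⁻¹ = 1 :=
      Matrix.mul_nonsing_inv _ ((Matrix.isUnit_iff_isUnit_det _).mp (hΦinv (k + 1)))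
    simp only [green, lt_add_one, lt_irrefl, if_true, if_false]
    rw [mul_neg, ← Matrix.mul_assoc, ← Matrix.mul_assoc, ← hΦ, Matrix.mul_sub, Matrix.sub_mul,
      Matrix.mul_one, hinv]
    abel
  · rw [green, green, if_neg hk.not_gt, if_neg (Int.add_one_le_of_lt hk).not_gt, if_neg hk.ne',
      add_zero, hΦ n, mul_neg]
    simp only [Matrix.mul_assoc]

lemma norm_green_le_of_dichotomy {K ρ : ℝ}
    (hdich : ∀ n k : ℤ,
      (k < n → ‖green Φ P n k‖ ≤ K * ρ ^ (n - k)) ∧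
      (n ≤ k → ‖green Φ P n k‖ ≤ K * ρ ^ (k - n))) (n k : ℤ) :
    ‖green Φ P n k‖ ≤ K * ρ ^ (n - k).natAbs := by
  rcases lt_or_ge k n with hk | hk
  · simpa [← zpow_natCast, abs_of_pos (sub_pos.2 hk)] using (hdich n k).1 hk
  · simpa [← zpow_natCast, abs_of_nonpos (sub_nonpos.2 hk)] using (hdich n k).2 hk

end Green

lemma hasSum_mul_pow_natAbs_sub {ρ : ℝ} (C : ℝ) (hρ0 : 0 ≤ ρ) (hρ1 : ρ < 1) (n : ℤ) :
    HasSum (fun k : ℤ => C * ρ ^ (n - k).natAbs) (C * ((1 + ρ) / (1 - ρ))) :=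
  ((Equiv.subLeft n).hasSum_iff.2 (hasSum_pow_natAbs hρ0 hρ1)).mul_left C

def greenSum (Φ : ℤ → Mat q) (P : Mat q) (g : ℤ → Vec q) (n : ℤ) : Vec q :=
  ∑' k : ℤ, aMul (green Φ P n k) (g k)

section GreenSum

variable {H Φ : ℤ → Mat q} {P : Mat q} {K ρ M : ℝ} {g : ℤ → Vec q}
  (hG : ∀ n k, ‖green Φ P n k‖ ≤ K * ρ ^ (n - k).natAbs) (hρ0 : 0 ≤ ρ) (hρ1 : ρ < 1)
  (hg : ∀ k, ‖g k‖ ≤ M)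
include hG hρ0 hρ1 hg

omit hρ0 hρ1 in
lemma norm_aMul_green_le (n k : ℤ) :
    ‖aMul (green Φ P n k) (g k)‖ ≤ K * M * ρ ^ (n - k).natAbs :=
  calc ‖aMul (green Φ P n k) (g k)‖ ≤ ‖green Φ P n k‖ * ‖g k‖ := norm_aMul_le _ _
    _ ≤ K * ρ ^ (n - k).natAbs * M :=
      mul_le_mul (hG n k) (hg k) (norm_nonneg _) ((norm_nonneg _).trans (hG n k))
    _ = K * M * ρ ^ (n - k).natAbs := by ring

lemma summable_norm_aMul_green (n : ℤ) :
    Summable fun k => ‖aMul (green Φ P n k) (g k)‖ :=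
  (hasSum_mul_pow_natAbs_sub (K * M) hρ0 hρ1 n).summable.of_nonneg_of_le (fun _ => norm_nonneg _)
    (norm_aMul_green_le hG hg n)

lemma norm_greenSum_le (n : ℤ) : ‖greenSum Φ P g n‖ ≤ 2 * K / (1 - ρ) * M := by
  have hK : 0 ≤ K := by simpa using (norm_nonneg _).trans (hG n n)
  have hM : 0 ≤ M := (norm_nonneg _).trans (hg 0)
  calc ‖greenSum Φ P g n‖ ≤ K * M * ((1 + ρ) / (1 - ρ)) :=
        tsum_of_norm_bounded (hasSum_mul_pow_natAbs_sub (K * M) hρ0 hρ1 n)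
          (norm_aMul_green_le hG hg n)
    _ ≤ K * M * (2 / (1 - ρ)) := by
        gcongr
        linarith
    _ = 2 * K / (1 - ρ) * M := by ring

lemma greenSum_succ (hΦinv : ∀ n, IsUnit (Φ n)) (hΦ : ∀ n, Φ (n + 1) = H n * Φ n) (n : ℤ) :
    greenSum Φ P g (n + 1) = aMul (H n) (greenSum Φ P g n) + g n := by
  have hs : Summable fun k => aMul (green Φ P n k) (g k) :=
    (summable_norm_aMul_green hG hρ0 hρ1 hg n).of_norm
  have hterm : ∀ k, aMul (green Φ P (n + 1) k) (g k)
      = aMul (H n) (aMul (green Φ P n k) (g k)) + if k = n then g n else 0 := by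
    intro k
    rw [green_succ hΦinv hΦ, add_aMul, mul_aMul]
    split_ifs with hk
    · rw [hk, one_aMul]
    · simp [aMul]
  rw [greenSum, greenSum]
  simp only [aMul_eq_toEuclideanCLM] at hs hterm ⊢
  rw [tsum_congr hterm,
    (hs.mapL (Matrix.toEuclideanCLM (𝕜 := ℂ) (H n))).tsum_add (hasSum_ite_eq n (g n)).summable,
    tsum_ite_eq, ContinuousLinearMap.map_tsum _ hs]

end GreenSum

section Uniqueness

variable {H Φ : ℤ → Mat q} {P : Mat q} {K ρ : ℝ}

lemma eq_aMul_of_le (hΦinv : ∀ n, IsUnit (Φ n)) (hΦ : ∀ n, Φ (n + 1) = H n * Φ n)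
    {d : ℤ → Vec q} (hd : ∀ n, d (n + 1) = aMul (H n) (d n)) {m n : ℤ} (hmn : m ≤ n) :
    d n = aMul (Φ n * (Φ m)⁻¹) (d m) := by
  induction n, hmn using Int.leInduction with
  | base =>
    rw [Matrix.mul_nonsing_inv _ ((Matrix.isUnit_iff_isUnit_det _).mp (hΦinv m)), one_aMul]
  | succ n _ ih => rw [hd, ih, ← mul_aMul, hΦ, Matrix.mul_assoc]

lemma eq_zero_of_bounded_homogeneous (hΦinv : ∀ n, IsUnit (Φ n))
    (hΦ : ∀ n, Φ (n + 1) = H n * Φ n) (hG : ∀ n k, ‖green Φ P n k‖ ≤ K * ρ ^ (n - k).natAbs)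
    (hρ0 : 0 ≤ ρ) (hρ1 : ρ < 1) {d : ℤ → Vec q} (hd : ∀ n, d (n + 1) = aMul (H n) (d n))
    {C : ℝ} (hC : ∀ n, ‖d n‖ ≤ C) : d = 0 := by
  funext n
  have hdet : ∀ m, IsUnit (Φ m).det := fun m => (Matrix.isUnit_iff_isUnit_det _).mp (hΦinv m)
  have hterm : ∀ k, ‖aMul (green Φ P n k) (d (k + 1))‖ ≤ K * C * ρ ^ (n - k).natAbs :=
    norm_aMul_green_le hG (g := fun k => d (k + 1)) (fun k => hC (k + 1)) n
  have hvw : d n = aMul (Φ n * P * (Φ n)⁻¹) (d n) + aMul (Φ n * (1 - P) * (Φ n)⁻¹) (d n) := by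
    rw [← add_aMul, ← Matrix.add_mul, ← Matrix.mul_add, add_sub_cancel, Matrix.mul_one,
      Matrix.mul_nonsing_inv _ (hdet n), one_aMul]
  have hv : ∀ j : ℕ, 0 < j → ‖aMul (Φ n * P * (Φ n)⁻¹) (d n)‖ ≤ K * C * ρ ^ j := by
    intro j hj
    have hgreen : aMul (green Φ P n (n - j)) (d (n - j + 1)) = aMul (Φ n * P * (Φ n)⁻¹) (d n) := by
      rw [green, if_pos (by omega), eq_aMul_of_le hΦinv hΦ hd (m := n - j + 1) (n := n) (by omega),
        ← mul_aMul]
      simp only [Matrix.mul_assoc, Matrix.nonsing_inv_mul_cancel_left _ _ (hdet _)]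
    simpa [hgreen] using hterm (n - j)
  have hw : ∀ j : ℕ, 0 < j → ‖aMul (Φ n * (1 - P) * (Φ n)⁻¹) (d n)‖ ≤ K * C * ρ ^ j := by
    intro j _
    have hgreen : aMul (green Φ P n (n + j)) (d (n + j + 1))
        = -aMul (Φ n * (1 - P) * (Φ n)⁻¹) (d n) := by
      rw [green, if_neg (by omega), eq_aMul_of_le hΦinv hΦ hd (m := n) (n := n + j + 1) (by omega),
        ← mul_aMul, Matrix.neg_mul, neg_aMul]
      simp only [Matrix.mul_assoc, Matrix.nonsing_inv_mul_cancel_left _ _ (hdet _)]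
    simpa [hgreen] using hterm (n + j)
  rw [hvw, eq_zero_of_forall_norm_le_mul_pow hρ0 hρ1 hv,
    eq_zero_of_forall_norm_le_mul_pow hρ0 hρ1 hw, add_zero, Pi.zero_apply]

lemma eq_greenSum_of_bounded_solution (hΦinv : ∀ n, IsUnit (Φ n))
    (hΦ : ∀ n, Φ (n + 1) = H n * Φ n) (hG : ∀ n k, ‖green Φ P n k‖ ≤ K * ρ ^ (n - k).natAbs)
    (hρ0 : 0 ≤ ρ) (hρ1 : ρ < 1) {g : ℤ → Vec q} {M : ℝ} (hg : ∀ k, ‖g k‖ ≤ M)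
    {c : ℤ → Vec q} (hc : ∀ n, c (n + 1) = aMul (H n) (c n) + g n) {C : ℝ}
    (hC : ∀ n, ‖c n‖ ≤ C) : c = greenSum Φ P g := by
  refine sub_eq_zero.mp (eq_zero_of_bounded_homogeneous hΦinv hΦ hG hρ0 hρ1
    (d := c - greenSum Φ P g) (C := C + 2 * K / (1 - ρ) * M) (fun n => ?_) (fun n => ?_))
  · simp only [Pi.sub_apply, hc, greenSum_succ hG hρ0 hρ1 hg hΦinv hΦ, aMul_sub]
    abel
  · exact (norm_sub_le _ _).trans (add_le_add (hC n) (norm_greenSum_le hG hρ0 hρ1 hg n))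

end Uniqueness

section AlmostPeriodic

variable {E F : Type*} [NormedAddCommGroup E] [NormedAddCommGroup F]

lemma RelDenseZ.mono {s t : Set ℤ} (hs : RelDenseZ s) (hst : s ⊆ t) : RelDenseZ t :=
  let ⟨l, hl, hs⟩ := hs
  ⟨l, hl, fun m => (hs m).mono (Set.inter_subset_inter_left _ hst)⟩

lemma norm_shift_sub_le {f : ℤ → E} {a b s : ℤ} {ε δ : ℝ}
    (ha : ∀ n, ‖f (n + a) - f (n + s)‖ ≤ ε) (hb : ∀ n, ‖f (n + b) - f (n + s)‖ ≤ δ) (n : ℤ) :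
    ‖f (n + (a - b)) - f n‖ ≤ ε + δ := by
  have h := norm_sub_le_norm_sub_add_norm_sub (f (n + (a - b))) (f (n - b + s)) (f n)
  rw [norm_sub_rev (f (n - b + s))] at h
  have ha' := ha (n - b)
  have hb' := hb (n - b)
  rw [show n - b + a = n + (a - b) by ring] at ha'
  rw [sub_add_cancel] at hb'
  linarith

lemma APZ.exists_shift_approx {f : ℤ → E} (hf : APZ f) {ε : ℝ} (hε : 0 < ε) :
    ∃ l : ℤ, ∃ σ : ℤ → ℤ, ∀ τ, σ τ ∈ Set.Icc 0 l ∧ ∀ n, ‖f (n + τ) - f (n + σ τ)‖ ≤ ε := by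
  obtain ⟨l, -, hl⟩ := hf ε hε
  choose p hp using fun τ => hl (τ - l)
  refine ⟨l, fun τ => τ - p τ, fun τ => ⟨⟨by linarith [(hp τ).2.2], by linarith [(hp τ).2.1]⟩,
    fun n => ?_⟩⟩
  have h := (hp τ).1 (n + (τ - p τ))
  rwa [add_assoc, sub_add_cancel] at h

lemma APZ.exists_bound {f : ℤ → E} (hf : APZ f) : ∃ M, ∀ n, ‖f n‖ ≤ M := by
  obtain ⟨l, σ, hσ⟩ := hf.exists_shift_approx one_pos
  obtain ⟨B, hB⟩ := ((Set.finite_Icc 0 l).image fun s => ‖f s‖).bddAbove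
  refine ⟨1 + B, fun n => ?_⟩
  have hn := (hσ n).2 0
  simp only [zero_add] at hn
  linarith [norm_le_norm_sub_add (f n) (f (σ n)), hB ⟨σ n, (hσ n).1, rfl⟩]

lemma APZ.prod {f : ℤ → E} {g : ℤ → F} (hf : APZ f) (hg : APZ g) :
    APZ fun n => (f n, g n) := by
  intro ε hε
  obtain ⟨l₁, σ₁, hσ₁⟩ := hf.exists_shift_approx (half_pos hε)
  obtain ⟨l₂, σ₂, hσ₂⟩ := hg.exists_shift_approx (half_pos hε)
  -- Translates with the same pair of approximating shifts differ by a common `ε`-period, and there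
  -- are finitely many pairs; so a bounded set of representatives `r τ` does the job.
  set σ : ℤ → ℤ × ℤ := fun τ => (σ₁ τ, σ₂ τ)
  set r : ℤ → ℤ := Function.invFun σ ∘ σ
  have hr : ∀ τ, σ (r τ) = σ τ := fun τ => Function.invFun_eq ⟨τ, rfl⟩
  have hfin : (Set.range fun τ => |r τ|).Finite := by
    have hσfin : (Set.range σ).Finite := ((Set.finite_Icc 0 l₁).prod (Set.finite_Icc 0 l₂)).subset
      (Set.range_subset_iff.2 fun τ => ⟨(hσ₁ τ).1, (hσ₂ τ).1⟩)
    exact (hσfin.image fun p => |Function.invFun σ p|).subset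
      (Set.range_subset_iff.2 fun τ => ⟨σ τ, ⟨τ, rfl⟩, rfl⟩)
  obtain ⟨B, hB⟩ := hfin.bddAbove
  have hrB : ∀ τ, |r τ| ≤ B := fun τ => hB ⟨τ, rfl⟩
  refine ⟨2 * B + 1, by linarith [abs_nonneg (r 0), hrB 0], fun m => ?_⟩
  have hτ := abs_le.1 (hrB (m + B))
  refine ⟨m + B - r (m + B), fun n => ?_, by constructor <;> linarith⟩
  have h₁ : σ₁ (r (m + B)) = σ₁ (m + B) := congrArg Prod.fst (hr (m + B))
  have h₂ : σ₂ (r (m + B)) = σ₂ (m + B) := congrArg Prod.snd (hr (m + B))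
  exact norm_prod_le_iff.2
    ⟨(norm_shift_sub_le (hσ₁ _).2 (h₁ ▸ (hσ₁ (r (m + B))).2) n).trans_eq (add_halves ε),
      (norm_shift_sub_le (hσ₂ _).2 (h₂ ▸ (hσ₂ (r (m + B))).2) n).trans_eq (add_halves ε)⟩

end AlmostPeriodic

lemma APZ.of_bounded_solution {H Φ : ℤ → Mat q} {P : Mat q} {K ρ : ℝ}
    (hΦinv : ∀ n, IsUnit (Φ n)) (hΦ : ∀ n, Φ (n + 1) = H n * Φ n)
    (hG : ∀ n k, ‖green Φ P n k‖ ≤ K * ρ ^ (n - k).natAbs) (hρ0 : 0 ≤ ρ) (hρ1 : ρ < 1)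
    (hHap : APZ H) {h : ℤ → Vec q} (hhap : APZ h) {c : ℤ → Vec q}
    (hc : ∀ n, c (n + 1) = aMul (H n) (c n) + h n) {C : ℝ} (hC : ∀ n, ‖c n‖ ≤ C) : APZ c := by
  intro ε hε
  have hK : 0 ≤ K := by simpa using (norm_nonneg _).trans (hG 0 0)
  have hC0 : 0 ≤ C := (norm_nonneg _).trans (hC 0)
  set L := 2 * K / (1 - ρ) * (C + 1)
  have hL : 0 ≤ L := by have := sub_pos.2 hρ1; positivity
  set δ := ε / (L + 1)
  have hδ : 0 < δ := by positivity
  refine (hHap.prod hhap δ hδ).mono fun τ hτ n => ?_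
  set g : ℤ → Vec q := fun k => aMul (H (k + τ) - H k) (c (k + τ)) + (h (k + τ) - h k)
  have hg : ∀ k, ‖g k‖ ≤ δ * (C + 1) := fun k =>
    calc ‖g k‖ ≤ ‖H (k + τ) - H k‖ * ‖c (k + τ)‖ + ‖h (k + τ) - h k‖ :=
          (norm_add_le _ _).trans (add_le_add_left (norm_aMul_le _ _) _)
      _ ≤ δ * C + δ :=
          add_le_add (mul_le_mul ((norm_fst_le _).trans (hτ k)) (hC _) (norm_nonneg _) hδ.le)
            ((norm_snd_le _).trans (hτ k))
      _ = δ * (C + 1) := by ring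
  have hsol : ∀ k, c (k + 1 + τ) - c (k + 1) = aMul (H k) (c (k + τ) - c k) + g k := by
    intro k
    rw [show k + 1 + τ = k + τ + 1 by ring, hc, hc, aMul_sub]
    simp only [g, sub_aMul]
    abel
  have hdiff := eq_greenSum_of_bounded_solution hΦinv hΦ hG hρ0 hρ1 hg
    (c := fun k => c (k + τ) - c k) hsol (C := C + C)
    fun k => (norm_sub_le _ _).trans (add_le_add (hC _) (hC _))
  calc ‖c (n + τ) - c n‖ = ‖greenSum Φ P g n‖ := by rw [← hdiff]
    _ ≤ 2 * K / (1 - ρ) * (δ * (C + 1)) := norm_greenSum_le hG hρ0 hρ1 hg n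
    _ = L / (L + 1) * ε := by ring
    _ ≤ ε := mul_le_of_le_one_left hε.le ((div_le_one (by positivity)).2 (by linarith))

theorem ap_solution_of_linear_difference_equation_general {q : ℕ}
    (H : ℤ → Mat q) (hHap : APZ H)
    (Φ : ℤ → Mat q) (hΦinv : ∀ n : ℤ, IsUnit (Φ n))
    (hΦ : ∀ n : ℤ, Φ (n + 1) = H n * Φ n)
    (P : Mat q)
    (K ρ : ℝ) (hρ0 : 0 < ρ) (hρ1 : ρ < 1)
    (hdich : ∀ n k : ℤ,
      (k < n → ‖green Φ P n k‖ ≤ K * ρ ^ (n - k)) ∧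
      (n ≤ k → ‖green Φ P n k‖ ≤ K * ρ ^ (k - n)))
    (h : ℤ → Vec q) (hhap : APZ h) :
    (∀ n : ℤ, Summable fun k : ℤ => ‖aMul (green Φ P n k) (h k)‖) ∧
    (let c : ℤ → Vec q := fun n => ∑' k : ℤ, aMul (green Φ P n k) (h k);
      (∀ n : ℤ, c (n + 1) = aMul (H n) (c n) + h n) ∧
      (∃ C : ℝ, ∀ n : ℤ, ‖c n‖ ≤ C) ∧
      (∀ c' : ℤ → Vec q, (∀ n : ℤ, c' (n + 1) = aMul (H n) (c' n) + h n) →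
        (∃ C : ℝ, ∀ n : ℤ, ‖c' n‖ ≤ C) → c' = c) ∧
      APZ c ∧
      (∀ n : ℤ, ‖c n‖ ≤ 2 * K / (1 - ρ) * ⨆ m : ℤ, ‖h m‖)) := by
  have hG := norm_green_le_of_dichotomy hdich
  obtain ⟨M, hM⟩ := hhap.exists_bound
  have hbound := norm_greenSum_le hG hρ0.le hρ1 hM
  have hsol := greenSum_succ hG hρ0.le hρ1 hM hΦinv hΦ
  have hsup : ∀ k, ‖h k‖ ≤ ⨆ m : ℤ, ‖h m‖ := le_ciSup ⟨M, Set.forall_mem_range.2 hM⟩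
  exact ⟨summable_norm_aMul_green hG hρ0.le hρ1 hM, hsol, ⟨_, hbound⟩,
    fun c' hc' ⟨C, hC⟩ => eq_greenSum_of_bounded_solution hΦinv hΦ hG hρ0.le hρ1 hM hc' hC,
    APZ.of_bounded_solution hΦinv hΦ hG hρ0.le hρ1 hHap hhap hsol hbound,
    norm_greenSum_le hG hρ0.le hρ1 hsup⟩

/-- for an almost periodic `H` whose difference equation has an exponential
dichotomy `(Π, K, ρ)` and an almost periodic `h`, the series `c(n) = Σ_k 𝒢(n,k) h(k)`
converges absolutely, `c` is the unique bounded solution of `c(n+1) = H(n)c(n) + h(n)`,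
`c` is almost periodic and `sup_n ‖c n‖ ≤ (2K/(1-ρ)) sup_n ‖h n‖`. -/
theorem ap_solution_of_linear_difference_equation {q : ℕ} (hq : 1 ≤ q)
    (H : ℤ → Mat q) (hHap : APZ H) (hHinv : ∀ n : ℤ, IsUnit (H n))
    (Φ : ℤ → Mat q) (hΦinv : ∀ n : ℤ, IsUnit (Φ n))
    (hΦ : ∀ n : ℤ, Φ (n + 1) = H n * Φ n)
    (P : Mat q) (hP : P * P = P)
    (K ρ : ℝ) (hK : 0 < K) (hρ0 : 0 < ρ) (hρ1 : ρ < 1)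
    (hdich : ∀ n k : ℤ,
      (k < n → ‖green Φ P n k‖ ≤ K * ρ ^ (n - k)) ∧
      (n ≤ k → ‖green Φ P n k‖ ≤ K * ρ ^ (k - n)))
    (h : ℤ → Vec q) (hhap : APZ h) :
    (∀ n : ℤ, Summable fun k : ℤ => ‖aMul (green Φ P n k) (h k)‖) ∧
    (let c : ℤ → Vec q := fun n => ∑' k : ℤ, aMul (green Φ P n k) (h k);
      (∀ n : ℤ, c (n + 1) = aMul (H n) (c n) + h n) ∧
      (∃ C : ℝ, ∀ n : ℤ, ‖c n‖ ≤ C) ∧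
      (∀ c' : ℤ → Vec q, (∀ n : ℤ, c' (n + 1) = aMul (H n) (c' n) + h n) →
        (∃ C : ℝ, ∀ n : ℤ, ‖c' n‖ ≤ C) → c' = c) ∧
      APZ c ∧
      (∀ n : ℤ, ‖c n‖ ≤ 2 * K / (1 - ρ) * ⨆ m : ℤ, ‖h m‖)) :=
  ap_solution_of_linear_difference_equation_general H hHap Φ hΦinv hΦ P K ρ hρ0 hρ1 hdich h hhap
end
end

section
/- Let K ≥ 1, L > 0, 0 < ρ < 1, let p_1, …, p_ℓ be positive integers and p = max_j p_j. Suppose u : ℤ → [0, ∞) satisfies, for every integer n ≥ 0, u(n) ≤ Kρⁿ u(0) + K L Σ_{k=0}^{n−1} ρ^{n−k} Σ_{j=1}^{ℓ} u(k − p_j). Then for every integer n ≥ 0, u(n) ≤ K ρⁿ (1 + K L ℓ ρ^{−p})ⁿ · max_{0 ≤ j ≤ p} u(−j). -/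
open Finset

/-- discrete Gronwall-type inequality: if `K ≥ 1`, `L > 0`, `0 < ρ < 1`,
`p_1, …, p_ℓ ≥ 1` with `p = max_j p_j`, and a nonnegative `u : ℤ → ℝ` satisfies
`u(n) ≤ Kρⁿu(0) + KL Σ_{k<n} ρ^{n−k} Σ_j u(k − p_j)` for all `n ≥ 0`, then
`u(n) ≤ Kρⁿ(1 + KLℓρ^{−p})ⁿ · max_{0 ≤ j ≤ p} u(−j)` for all `n ≥ 0`. -/
theorem discrete_gronwall_delay {ℓ : ℕ} (hℓ : 1 ≤ ℓ)
    (K L ρ : ℝ) (hK : 1 ≤ K) (hL : 0 < L) (hρ0 : 0 < ρ) (hρ1 : ρ < 1)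
    (p : Fin ℓ → ℕ) (hp : ∀ j : Fin ℓ, 1 ≤ p j)
    (pm : ℕ) (hpm : IsGreatest (Set.range p) pm)
    (u : ℤ → ℝ) (hu : ∀ n : ℤ, 0 ≤ u n)
    (hrec : ∀ n : ℕ, u n ≤ K * ρ ^ n * u 0 +
      K * L * ∑ k ∈ Finset.range n, ρ ^ (n - k) * ∑ j : Fin ℓ, u ((k : ℤ) - (p j : ℤ))) :
    ∀ n : ℕ, u n ≤ K * ρ ^ n * (1 + K * L * ℓ * (ρ ^ pm)⁻¹) ^ n *
      ((Finset.range (pm + 1)).sup' (by simp) fun j => u (-(j : ℤ))) := by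
  set M := (Finset.range (pm + 1)).sup' (by simp) fun j => u (-(j : ℤ)) with hMdef
  set c := K * L * ℓ * (ρ ^ pm)⁻¹ with hcdef
  have hK0 : (0:ℝ) < K := lt_of_lt_of_le one_pos hK
  have hρpm : (0:ℝ) < ρ ^ pm := pow_pos hρ0 pm
  have hℓ0 : (0:ℝ) < (ℓ:ℝ) := by exact_mod_cast hℓ
  have hc : 0 < c := by
    have h : 0 < (ρ ^ pm)⁻¹ := inv_pos.mpr hρpm
    rw [hcdef]; positivity
  have h1c : (1:ℝ) ≤ 1 + c := by linarith
  have hMneg : ∀ m : ℕ, m ≤ pm → u (-(m:ℤ)) ≤ M := by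
    intro m hm
    rw [hMdef]
    exact Finset.le_sup' (fun j : ℕ => u (-(j:ℤ)))
      (Finset.mem_range.mpr (Nat.lt_succ_of_le hm))
  have hM0 : u 0 ≤ M := by
    have := hMneg 0 (Nat.zero_le pm)
    simpa using this
  have hMnonneg : 0 ≤ M := le_trans (hu 0) hM0
  have hpj : ∀ j, p j ≤ pm := fun j => hpm.2 ⟨j, rfl⟩
  intro n
  induction n using Nat.strong_induction_on with
  | _ n ih =>
  have claim : ∀ k, k < n → ∀ j : Fin ℓ,
      u ((k:ℤ) - (p j : ℤ)) ≤ K * ρ ^ k * (ρ ^ pm)⁻¹ * (1+c) ^ k * M := by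
    intro k hk j
    rcases le_or_gt (p j) k with h | h
    · have hcast : (k:ℤ) - (p j : ℤ) = ((k - p j : ℕ) : ℤ) := by
        have h2 : ((k - p j : ℕ) : ℤ) = (k:ℤ) - (p j : ℤ) := by
          exact_mod_cast Int.ofNat_sub h
        omega
      rw [hcast]
      refine (ih (k - p j) (lt_of_le_of_lt (Nat.sub_le k (p j)) hk)).trans ?_
      have h1 : ρ ^ (k - p j) ≤ ρ ^ k * (ρ ^ pm)⁻¹ := by
        rw [← div_eq_mul_inv, le_div_iff₀ hρpm, ← pow_add]
        have hj := hpj j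
        exact pow_le_pow_of_le_one hρ0.le hρ1.le (by omega)
      have h2 : (1+c) ^ (k - p j) ≤ (1+c) ^ k :=
        pow_le_pow_right₀ h1c (Nat.sub_le k _)
      calc K * ρ ^ (k - p j) * (1+c) ^ (k - p j) * M
          ≤ K * (ρ ^ k * (ρ ^ pm)⁻¹) * (1+c) ^ k * M := by
            have hρk : 0 ≤ ρ ^ (k - p j) := by positivity
            have h1cp : 0 ≤ (1+c) ^ (k - p j) := by positivity
            gcongr
        _ = K * ρ ^ k * (ρ ^ pm)⁻¹ * (1+c) ^ k * M := by ring
    · have hcast : (k:ℤ) - (p j : ℤ) = -(((p j - k : ℕ) : ℤ)) := by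
        have h2 : ((p j - k : ℕ) : ℤ) = (p j : ℤ) - (k:ℤ) := by
          exact_mod_cast Int.ofNat_sub h.le
        omega
      rw [hcast]
      have hle : u (-((p j - k : ℕ) : ℤ)) ≤ M :=
        hMneg (p j - k) (le_trans (Nat.sub_le _ _) (hpj j))
      refine hle.trans ?_
      have e1 : 1 ≤ ρ ^ k * (ρ ^ pm)⁻¹ := by
        rw [← div_eq_mul_inv, le_div_iff₀ hρpm, one_mul]
        exact pow_le_pow_of_le_one hρ0.le hρ1.le (le_trans h.le (hpj j))
      have e2 : (1:ℝ) ≤ (1+c) ^ k := one_le_pow₀ h1c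
      have e3 : (1:ℝ) ≤ K * ρ ^ k * (ρ ^ pm)⁻¹ * (1+c) ^ k := by
        have t1 : (1:ℝ) ≤ K * (ρ ^ k * (ρ ^ pm)⁻¹) := by nlinarith
        calc (1:ℝ) = 1 * 1 := by ring
          _ ≤ (K * (ρ ^ k * (ρ ^ pm)⁻¹)) * (1+c) ^ k :=
              mul_le_mul t1 e2 zero_le_one (by positivity)
          _ = K * ρ ^ k * (ρ ^ pm)⁻¹ * (1+c) ^ k := by ring
      calc M = 1 * M := (one_mul M).symm
        _ ≤ K * ρ ^ k * (ρ ^ pm)⁻¹ * (1+c) ^ k * M :=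
            mul_le_mul_of_nonneg_right e3 hMnonneg
  have key : ∀ k ∈ Finset.range n,
      K * L * (ρ ^ (n - k) * ∑ j : Fin ℓ, u ((k:ℤ) - (p j : ℤ)))
        ≤ K * ρ ^ n * M * c * (1+c) ^ k := by
    intro k hk
    have hkn := Finset.mem_range.mp hk
    have hsum : ∑ j : Fin ℓ, u ((k:ℤ) - (p j : ℤ))
        ≤ ℓ * (K * ρ ^ k * (ρ ^ pm)⁻¹ * (1+c) ^ k * M) := by
      calc ∑ j : Fin ℓ, u ((k:ℤ) - (p j : ℤ))
          ≤ ∑ _j : Fin ℓ, K * ρ ^ k * (ρ ^ pm)⁻¹ * (1+c) ^ k * M :=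
            Finset.sum_le_sum fun j _ => claim k hkn j
        _ = ℓ * (K * ρ ^ k * (ρ ^ pm)⁻¹ * (1+c) ^ k * M) := by
            simp [Finset.sum_const, mul_comm]
    have hρnk : 0 ≤ ρ ^ (n - k) := by positivity
    have hpow : ρ ^ (n - k) * ρ ^ k = ρ ^ n := by
      rw [← pow_add, Nat.sub_add_cancel hkn.le]
    calc K * L * (ρ ^ (n - k) * ∑ j : Fin ℓ, u ((k:ℤ) - (p j : ℤ)))
        ≤ K * L * (ρ ^ (n - k) * (ℓ * (K * ρ ^ k * (ρ ^ pm)⁻¹ * (1+c) ^ k * M))) := by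
          gcongr
      _ = K * ρ ^ n * M * c * (1+c) ^ k := by
          rw [hcdef]
          linear_combination (K * L * ℓ * K * (ρ ^ pm)⁻¹ * (1+c) ^ k * M) * hpow
  have hg : ∑ k ∈ Finset.range n, (1+c) ^ k = ((1+c) ^ n - 1) / c := by
    rw [geom_sum_eq (by linarith : (1:ℝ) + c ≠ 1)]
    ring_nf
  calc u n ≤ K * ρ ^ n * u 0 +
      K * L * ∑ k ∈ Finset.range n, ρ ^ (n - k) * ∑ j : Fin ℓ, u ((k:ℤ) - (p j : ℤ)) :=
        hrec n
    _ ≤ K * ρ ^ n * M + ∑ k ∈ Finset.range n, K * ρ ^ n * M * c * (1+c) ^ k := by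
        have h1 : K * ρ ^ n * u 0 ≤ K * ρ ^ n * M := by
          have h : 0 ≤ K * ρ ^ n := by positivity
          exact mul_le_mul_of_nonneg_left hM0 h
        have h2 : K * L * ∑ k ∈ Finset.range n, ρ ^ (n - k) *
            ∑ j : Fin ℓ, u ((k:ℤ) - (p j : ℤ))
            ≤ ∑ k ∈ Finset.range n, K * ρ ^ n * M * c * (1+c) ^ k := by
          rw [Finset.mul_sum]
          exact Finset.sum_le_sum key
        linarith
    _ = K * ρ ^ n * M + K * ρ ^ n * M * c * (((1+c) ^ n - 1) / c) := by
        rw [← Finset.mul_sum, hg]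
    _ = K * ρ ^ n * (1+c) ^ n * M := by
        field_simp
        ring
end
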